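/- arXiv:2203.12479 — 10 statements merged into one kernel-verified Lean document; each statement's English description precedes it below -/
import Mathlib

section
/- Let (x_n) be a summable sequence of positive real numbers such that the achievement set E(x_n) contains a nondegenerate interval (equivalently, E(x_n) has nonempty interior in ℝ). Then the uniqueness set U(x_n) has empty interior in ℝ. -/
open Set Topology

noncomputable section

/-- The achievement set (set of subsums) of a series `∑ xₙ`. -/
def achSet (x : ℕ → ℝ) : Set ℝ := {t : ℝ | ∃ A : Set ℕ, t = ∑' n : A, x n}

/-- The uniqueness set: points having exactly one representation as a subsum. -/
def uniqSet (x : ℕ → ℝ) : Set ℝ := {t : ℝ | ∃! A : Set ℕ, t = ∑' n : A, x n}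

/-!
Encode a subset of `ℕ` by its indicator in the Cantor space `ℕ → Bool`. The subsum map on Cantor
space is continuous, and it is injective over points with a unique representation. If `U(xₙ)`
contained an interval `[a, b]` with `a < b`, the subsum map would restrict to a continuous bijection
from a compact, totally disconnected space onto `[a, b]`, hence to a homeomorphism, which is
impossible since `[a, b]` is connected. So `U(xₙ)` is totally disconnected and has empty interior.
-/

theorem totallyDisconnectedSpace_of_continuous_bijective {X Y : Type*} [TopologicalSpace X]
    [CompactSpace X] [TotallyDisconnectedSpace X] [TopologicalSpace Y] [T2Space Y] {f : X → Y}
    (hf : Continuous f) (hbij : Function.Bijective f) : TotallyDisconnectedSpace Y :=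
  (hf.homeoOfEquivCompactToT2 (f := Equiv.ofBijective f hbij)).totallyDisconnectedSpace

theorem IsTotallyDisconnected.interior_eq_empty {α : Type*} [ConditionallyCompleteLinearOrder α]
    [TopologicalSpace α] [OrderTopology α] [DenselyOrdered α] [NoMaxOrder α] {s : Set α}
    (hs : IsTotallyDisconnected s) : interior s = ∅ := by
  refine eq_empty_of_forall_notMem fun t ht => ?_
  obtain ⟨u, htu, hIco⟩ := exists_Ico_subset_of_mem_nhds (mem_interior_iff_mem_nhds.mp ht)
    (exists_gt t)
  obtain ⟨v, htv, hvu⟩ := exists_between htu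
  obtain ⟨z, hzs, hz⟩ :=
    isTotallyDisconnected_iff_lt.mp hs t (hIco ⟨le_rfl, htu⟩) v (hIco ⟨htv.le, hvu⟩) htv
  exact hzs (hIco ⟨hz.1.le, hz.2.trans hvu⟩)

def subsum (x : ℕ → ℝ) (c : ℕ → Bool) : ℝ := ∑' n, if c n then x n else 0

theorem subsum_eq_tsum_subtype (x : ℕ → ℝ) (c : ℕ → Bool) :
    subsum x c = ∑' n : {n | c n}, x n := by
  rw [subsum, tsum_subtype]
  exact tsum_congr fun n => by simp [indicator_apply]

theorem continuous_subsum {x : ℕ → ℝ} (hx : Summable x) : Continuous (subsum x) := by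
  refine continuous_tsum (fun n => ?_) hx.abs fun n c => ?_
  · exact (continuous_of_discreteTopology (f := fun b : Bool => if b then x n else 0)).comp
      (continuous_apply n)
  · cases c n <;> simp

theorem uniqSet_subset_range_subsum (x : ℕ → ℝ) : uniqSet x ⊆ range (subsum x) := by
  rintro t ⟨A, rfl, -⟩
  classical
  have hA : {n | decide (n ∈ A)} = A := by ext; simp
  exact ⟨fun n => decide (n ∈ A), by rw [subsum_eq_tsum_subtype, hA]⟩

theorem injOn_subsum_preimage_uniqSet (x : ℕ → ℝ) :
    InjOn (subsum x) (subsum x ⁻¹' uniqSet x) := by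
  intro c₁ hc₁ c₂ _ h
  obtain ⟨A, -, hA⟩ := hc₁
  have h₁ := hA _ (subsum_eq_tsum_subtype x c₁)
  have h₂ := hA _ (h.trans (subsum_eq_tsum_subtype x c₂))
  funext n
  rw [Bool.eq_iff_iff]
  simpa using Set.ext_iff.mp (h₁.trans h₂.symm) n

theorem isTotallyDisconnected_of_isClosed_subset_uniqSet {x : ℕ → ℝ} (hx : Summable x)
    {s : Set ℝ} (hs : IsClosed s) (hsU : s ⊆ uniqSet x) : IsTotallyDisconnected s := by
  have : CompactSpace (subsum x ⁻¹' s) :=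
    isCompact_iff_compactSpace.mp (hs.preimage (continuous_subsum hx)).isCompact
  rw [← totallyDisconnectedSpace_subtype_iff]
  refine totallyDisconnectedSpace_of_continuous_bijective
    (continuous_subsum hx).restrictPreimage ⟨?_, ?_⟩
  · rintro ⟨c₁, hc₁⟩ ⟨c₂, hc₂⟩ h
    exact Subtype.ext <|
      injOn_subsum_preimage_uniqSet x (hsU hc₁) (hsU hc₂) (congrArg Subtype.val h)
  · rintro ⟨t, ht⟩
    obtain ⟨c, rfl⟩ := uniqSet_subset_range_subsum x (hsU ht)
    exact ⟨⟨c, ht⟩, rfl⟩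

theorem isTotallyDisconnected_uniqSet {x : ℕ → ℝ} (hx : Summable x) :
    IsTotallyDisconnected (uniqSet x) := by
  refine isTotallyDisconnected_iff_lt.mpr fun a ha b hb hab => ?_
  by_contra! hIoo
  have hIcc : Icc a b ⊆ uniqSet x := by
    rw [← Ico_insert_right hab.le, ← Ioo_insert_left hab]
    exact insert_subset hb (insert_subset ha fun z hz => by_contra fun hzU => hIoo z hzU hz)
  have hsub : (Icc a b).Subsingleton :=
    isTotallyDisconnected_of_isClosed_subset_uniqSet hx isClosed_Icc hIcc _ subset_rfl
      isPreconnected_Icc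
  exact hab.ne (hsub (left_mem_Icc.mpr hab.le) (right_mem_Icc.mpr hab.le))

theorem uniqSet_interior_empty_general (x : ℕ → ℝ) (hsum : Summable x) :
    interior (uniqSet x) = ∅ :=
  (isTotallyDisconnected_uniqSet hsum).interior_eq_empty

theorem uniqSet_interior_empty (x : ℕ → ℝ) (hpos : ∀ n, 0 < x n) (hsum : Summable x)
    (hint : (interior (achSet x)).Nonempty) :
    interior (uniqSet x) = ∅ :=
  uniqSet_interior_empty_general x hsum
end
end

section
/- Let (x_n) be a summable sequence of positive real numbers. If the uniqueness set U(x_n) equals {0, ∑_{n=1}^∞ x_n}, then the achievement set E(x_n) is the whole interval [0, ∑_{n=1}^∞ x_n]. -/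
/-!
If every term of a subsum `∑_{n ∈ A} xₙ` exceeds the complementary subsum `∑_{n ∉ A} xₙ`,
then no other set of indices has the same subsum. As the only uniquely represented points are
`0` and `∑ xₙ`, every nonempty set `A` with nonempty complement therefore contains an index `j`
with `xⱼ ≤ ∑_{n ∉ A} xₙ`. After rearranging `x` in decreasing order, this applied to the initial
segments is Kakeya's condition `xₙ ≤ ∑_{i > n} xᵢ`, under which the greedy algorithm reaches every
point of `[0, ∑ xₙ]`.
-/

open Set Topology

noncomputable section

open Filter Function

section SubsetSums

variable {ι : Type*} {x : ι → ℝ}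

theorem tsum_subtype_lt_of_ssubset (hpos : ∀ i, 0 < x i) (hsum : Summable x) {A B : Set ι}
    (h : A ⊂ B) : ∑' i : A, x i < ∑' i : B, x i := by
  obtain ⟨k, hkB, hkA⟩ := Set.exists_of_ssubset h
  have hsplit : ∑' i : B, x i = ∑' i : A, x i + ∑' i : ↥(B \ A), x i := by
    conv_lhs => rw [← Set.union_sdiff_cancel h.subset]
    exact (hsum.subtype _).tsum_union_disjoint disjoint_sdiff_right (hsum.subtype _)
  have hdiff : 0 < ∑' i : ↥(B \ A), x i :=
    (hsum.subtype _).tsum_pos (fun _ => (hpos _).le) ⟨k, hkB, hkA⟩ (hpos k)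
  linarith

theorem le_tsum_subtype (hx : ∀ i, 0 ≤ x i) (hsum : Summable x) {A : Set ι} {j : ι}
    (hj : j ∈ A) : x j ≤ ∑' i : A, x i :=
  (hsum.subtype A).le_tsum ⟨j, hj⟩ fun _ _ => hx _

end SubsetSums

section AchievementSet

variable {x : ℕ → ℝ}

theorem achSet_subset_Icc (hx : ∀ n, 0 ≤ x n) (hsum : Summable x) :
    achSet x ⊆ Icc 0 (∑' n, x n) := by
  rintro _ ⟨A, rfl⟩
  exact ⟨tsum_nonneg fun _ => hx _, hsum.tsum_subtype_le x A hx⟩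

theorem tsum_subtype_comp_equiv (x : ℕ → ℝ) (e : ℕ ≃ ℕ) (A : Set ℕ) :
    ∑' n : A, (x ∘ e) n = ∑' n : ↥(e '' A), x n :=
  (tsum_image x e.injective.injOn).symm

theorem achSet_comp_equiv (x : ℕ → ℝ) (e : ℕ ≃ ℕ) : achSet (x ∘ e) = achSet x := by
  ext t
  simp only [achSet, mem_ofPred_eq, tsum_subtype_comp_equiv]
  exact (Equiv.Set.congr e).exists_congr fun A => Iff.rfl

theorem uniqSet_comp_equiv (x : ℕ → ℝ) (e : ℕ ≃ ℕ) : uniqSet (x ∘ e) = uniqSet x := by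
  ext t
  simp only [uniqSet, mem_ofPred_eq, tsum_subtype_comp_equiv]
  exact (Equiv.Set.congr e).existsUnique_congr fun A => Iff.rfl

theorem tsum_subtype_mem_uniqSet (hpos : ∀ n, 0 < x n) (hsum : Summable x) {A : Set ℕ}
    (hA : ∀ j ∈ A, ∑' n : ↥Aᶜ, x n < x j) : ∑' n : A, x n ∈ uniqSet x := by
  refine ⟨A, rfl, fun B hB => ?_⟩
  have hAB : A ⊆ B := by
    intro j hjA
    by_contra hjB
    have hjBc : x j ≤ ∑' n : ↥Bᶜ, x n := le_tsum_subtype (fun n => (hpos n).le) hsum hjB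
    have hA' := hsum.tsum_subtype_add_tsum_subtype_compl A
    have hB' := hsum.tsum_subtype_add_tsum_subtype_compl B
    linarith [hA j hjA]
  by_contra hne
  exact (tsum_subtype_lt_of_ssubset hpos hsum (hAB.ssubset_of_ne (Ne.symm hne))).ne hB

theorem exists_mem_le_tsum_compl_of_uniqSet_eq (hpos : ∀ n, 0 < x n) (hsum : Summable x)
    (hU : uniqSet x = {0, ∑' n, x n}) {A : Set ℕ} (hA : A.Nonempty) (hAc : Aᶜ.Nonempty) :
    ∃ j ∈ A, x j ≤ ∑' n : ↥Aᶜ, x n := by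
  by_contra! h
  have hmem := tsum_subtype_mem_uniqSet hpos hsum h
  rw [hU] at hmem
  obtain ⟨j, hj⟩ := hA
  obtain ⟨k, hk⟩ := hAc
  have hx : ∀ n, 0 ≤ x n := fun n => (hpos n).le
  have hA_pos : 0 < ∑' n : A, x n := (hpos j).trans_le (le_tsum_subtype hx hsum hj)
  have hAc_pos : 0 < ∑' n : ↥Aᶜ, x n := (hpos k).trans_le (le_tsum_subtype hx hsum hk)
  have hsplit := hsum.tsum_subtype_add_tsum_subtype_compl A
  obtain h0 | hS : _ = (0 : ℝ) ∨ _ = ∑' n, x n := hmem <;> linarith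

theorem le_tsum_nat_add_of_uniqSet_eq (hpos : ∀ n, 0 < x n) (hsum : Summable x)
    (hanti : Antitone x) (hU : uniqSet x = {0, ∑' n, x n}) (n : ℕ) :
    x n ≤ ∑' i, x (i + (n + 1)) := by
  set F : Set ℕ := ↑(Finset.range (n + 1))
  obtain ⟨j, hjF, hj⟩ := exists_mem_le_tsum_compl_of_uniqSet_eq hpos hsum hU (A := F)
    ⟨0, by simp [F]⟩ (Finset.finite_toSet _).infinite_compl.nonempty
  have hF : ∑' i : F, x i = ∑ i ∈ Finset.range (n + 1), x i := Finset.tsum_subtype _ x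
  have hsplit := hsum.tsum_subtype_add_tsum_subtype_compl F
  have htail := hsum.sum_add_tsum_nat_add (n + 1)
  have hjn : x n ≤ x j := hanti (Nat.lt_succ_iff.mp (Finset.mem_range.mp hjF))
  linarith

end AchievementSet

section Greedy

variable {y : ℕ → ℝ} {t : ℝ}

/-- What is left of the target `t` after the greedy algorithm has scanned `y 0, …, y (n - 1)`,
taking each term that still fits. -/
def greedyResidual (y : ℕ → ℝ) (t : ℝ) : ℕ → ℝ
  | 0 => t
  | n + 1 => if y n ≤ greedyResidual y t n then greedyResidual y t n - y n
      else greedyResidual y t n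

theorem greedyResidual_nonneg (ht : 0 ≤ t) (n : ℕ) : 0 ≤ greedyResidual y t n := by
  induction n with
  | zero => exact ht
  | succ n ih =>
    simp only [greedyResidual]
    split_ifs <;> linarith

theorem greedyResidual_le_tsum_nat_add (hsum : Summable y)
    (hK : ∀ n, y n ≤ ∑' i, y (i + (n + 1))) (htS : t ≤ ∑' i, y i) (n : ℕ) :
    greedyResidual y t n ≤ ∑' i, y (i + n) := by
  induction n with
  | zero => simpa [greedyResidual] using htS
  | succ n ih =>
    have hn := hsum.sum_add_tsum_nat_add n
    have hn1 := hsum.sum_add_tsum_nat_add (n + 1)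
    rw [Finset.sum_range_succ] at hn1
    simp only [greedyResidual]
    split_ifs
    · linarith
    · linarith [hK n]

theorem sum_range_indicator_add_greedyResidual (n : ℕ) :
    ∑ i ∈ Finset.range n, {i | y i ≤ greedyResidual y t i}.indicator y i
      + greedyResidual y t n = t := by
  induction n with
  | zero => simp [greedyResidual]
  | succ n ih =>
    have hstep : {i | y i ≤ greedyResidual y t i}.indicator y n + greedyResidual y t (n + 1)
        = greedyResidual y t n := by
      simp only [greedyResidual, indicator, mem_ofPred_eq]
      split_ifs <;> ring
    rw [Finset.sum_range_succ, add_assoc, hstep, ih]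

/-- Kakeya's theorem. -/
theorem Icc_subset_achSet_of_le_tsum_nat_add (hy : ∀ n, 0 ≤ y n) (hsum : Summable y)
    (hK : ∀ n, y n ≤ ∑' i, y (i + (n + 1))) : Icc 0 (∑' n, y n) ⊆ achSet y := by
  rintro t ⟨ht0, htS⟩
  have hres : Tendsto (greedyResidual y t) atTop (𝓝 0) :=
    squeeze_zero (greedyResidual_nonneg ht0)
      (greedyResidual_le_tsum_nat_add hsum hK htS) (tendsto_sum_nat_add y)
  have hpartial : Tendsto
      (fun n => ∑ i ∈ Finset.range n, {i | y i ≤ greedyResidual y t i}.indicator y i)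
      atTop (𝓝 t) := by
    simpa using (hres.const_sub t).congr fun n =>
      (eq_sub_of_add_eq (sum_range_indicator_add_greedyResidual n)).symm
  have hA : HasSum ({i | y i ≤ greedyResidual y t i}.indicator y) t :=
    (hasSum_iff_tendsto_nat_of_nonneg (indicator_nonneg fun i _ => hy i) t).mpr hpartial
  exact ⟨_, by rw [tsum_subtype, hA.tsum_eq]⟩

end Greedy

section Rearrangement

variable {x : ℕ → ℝ}

theorem finite_setOf_le_of_tendsto_zero (hx : Tendsto x cofinite (𝓝 0)) {c : ℝ} (hc : 0 < c) :
    {n | c ≤ x n}.Finite := by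
  simpa only [not_lt] using eventually_cofinite.mp (hx.eventually (gt_mem_nhds hc))

theorem exists_notMem_forall_notMem_le (hpos : ∀ n, 0 < x n) (hx : Tendsto x cofinite (𝓝 0))
    (s : Finset ℕ) : ∃ m ∉ s, ∀ n ∉ s, x n ≤ x m := by
  obtain ⟨n₀, hn₀⟩ := Infinite.exists_notMem_finset s
  obtain ⟨m, ⟨hm, hms⟩, hmax⟩ := Set.exists_max_image ({n | x n₀ ≤ x n} \ ↑s) x
    (finite_setOf_le_of_tendsto_zero hx (hpos n₀)).sdiff ⟨n₀, le_refl (x n₀), hn₀⟩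
  refine ⟨m, hms, fun n hn => ?_⟩
  rcases le_or_gt (x n₀) (x n) with h | h
  · exact hmax n ⟨h, hn⟩
  · exact h.le.trans hm

theorem exists_equiv_antitone_comp (hpos : ∀ n, 0 < x n) (hx : Tendsto x cofinite (𝓝 0)) :
    ∃ e : ℕ ≃ ℕ, Antitone (x ∘ e) := by
  choose p hp_notMem hp_max using exists_notMem_forall_notMem_le hpos hx
  -- `chosen k = {σ 0, …, σ (k - 1)}`, and `σ k` indexes a largest term outside it.
  let chosen : ℕ → Finset ℕ := fun k => Nat.rec ∅ (fun _ C => insert (p C) C) k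
  let σ : ℕ → ℕ := fun k => p (chosen k)
  have hchosen_mono : Monotone chosen :=
    monotone_nat_of_le_succ fun k => Finset.subset_insert _ _
  have hinj : Injective σ := by
    refine .of_lt_imp_ne fun i j hij heq => hp_notMem (chosen j) ?_
    have hi : σ i ∈ chosen j := hchosen_mono hij (Finset.mem_insert_self _ _)
    rwa [heq] at hi
  have hsurj : Surjective σ := by
    intro m
    by_contra! hm
    have hnot : ∀ k, m ∉ chosen k := by
      intro k
      induction k with
      | zero => exact Finset.notMem_empty m
      | succ k ih => exact Finset.mem_insert.not.mpr (not_or.mpr ⟨(hm k).symm, ih⟩)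
    exact infinite_range_of_injective hinj <| (finite_setOf_le_of_tendsto_zero hx (hpos m)).subset
      (range_subset_iff.mpr fun k => hp_max _ m (hnot k))
  refine ⟨Equiv.ofBijective σ ⟨hinj, hsurj⟩, antitone_nat_of_succ_le fun k => hp_max _ _ ?_⟩
  exact fun h => hp_notMem _ (hchosen_mono k.le_succ h)

end Rearrangement

theorem achSet_eq_Icc_of_antitone_of_uniqSet_eq {x : ℕ → ℝ} (hpos : ∀ n, 0 < x n)
    (hsum : Summable x) (hanti : Antitone x) (hU : uniqSet x = {0, ∑' n, x n}) :
    achSet x = Icc 0 (∑' n, x n) :=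
  (achSet_subset_Icc (fun n => (hpos n).le) hsum).antisymm <|
    Icc_subset_achSet_of_le_tsum_nat_add (fun n => (hpos n).le) hsum
      (le_tsum_nat_add_of_uniqSet_eq hpos hsum hanti hU)

theorem achSet_eq_Icc_of_uniqSet_pair (x : ℕ → ℝ) (hpos : ∀ n, 0 < x n) (hsum : Summable x)
    (hU : uniqSet x = {0, ∑' n, x n}) :
    achSet x = Set.Icc 0 (∑' n, x n) := by
  obtain ⟨e, he⟩ := exists_equiv_antitone_comp hpos hsum.tendsto_cofinite_zero
  have hsum_e : ∑' n, (x ∘ e) n = ∑' n, x n := e.tsum_eq x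
  rw [← achSet_comp_equiv x e, ← hsum_e]
  refine achSet_eq_Icc_of_antitone_of_uniqSet_eq (fun n => hpos _) (e.summable_iff.mpr hsum) he ?_
  rw [uniqSet_comp_equiv, hsum_e, hU]
end
end

section
/- Let (x_n) be a summable sequence of positive real numbers such that the achievement set E(x_n) is a Cantorval. Then the uniqueness set U(x_n) is an infinite set. -/
open Set Topology

noncomputable section

/-- The Guthrie–Nymann sequence (0-indexed): `3/4, 2/4, 3/16, 2/16, …`,
i.e. `y_{2n-1} = 3/4ⁿ`, `y_{2n} = 2/4ⁿ` in 1-indexed notation. -/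
def gnSeq : ℕ → ℝ := fun n => if n % 2 = 0 then 3 / 4 ^ (n / 2 + 1) else 2 / 4 ^ (n / 2 + 1)

/-- A Cantorval is a subset of `ℝ` homeomorphic to the Guthrie–Nymann Cantorval
`E(y_n)` where `y_{2n-1} = 3/4ⁿ`, `y_{2n} = 2/4ⁿ`. -/
def IsCantorval (S : Set ℝ) : Prop := Nonempty (S ≃ₜ achSet gnSeq)

/-!
If `U(x)` were finite, some `δ > 0` would leave `(0, δ)` free of points of `U(x)`. Then for
`0 < v < δ` the terms `x k < v` sum to at least `v`: otherwise their sum `σ` lies in `(0, δ)`, and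
any subsum equal to `σ` uses only terms `< v`, hence all of them, so `σ ∈ U(x)`. This Kakeya-type
condition makes the subsums of the terms `x k < δ` fill the whole interval `[0, ρ]`,
`ρ = ∑_{x k < δ} x k` (greedy filling to any precision, then compactness). So `E(x)` is the finite
union of the intervals `∑_{k ∈ F} x k + [0, ρ]`, `F` ranging over sets of terms `≥ δ`, and has
finitely many connected components. The Guthrie–Nymann Cantorval has infinitely many: its points
`2 / 4 ^ (m + 1)` are separated from each other by the gaps `(5/3 / 4 ^ (m + 1), 2 / 4 ^ (m + 1))`.
-/

section Subsums

variable {x : ℕ → ℝ}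

lemma tsum_subtype_mono_of_nonneg (hx : ∀ n, 0 ≤ x n) (hsum : Summable x) {A B : Set ℕ}
    (hAB : A ⊆ B) : ∑' k : A, x k ≤ ∑' k : B, x k := by
  rw [tsum_subtype, tsum_subtype]
  exact (hsum.indicator A).tsum_le_tsum (indicator_le_indicator_of_subset hAB hx)
    (hsum.indicator B)

lemma le_tsum_subtype_of_nonneg (hx : ∀ n, 0 ≤ x n) (hsum : Summable x) {A : Set ℕ} {k : ℕ}
    (hk : k ∈ A) : x k ≤ ∑' j : A, x j :=
  (hsum.subtype A).le_tsum ⟨k, hk⟩ fun j _ => hx j.1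

lemma tsum_insert_of_notMem (hsum : Summable x) {A : Set ℕ} {k : ℕ} (hk : k ∉ A) :
    ∑' j : ↑(insert k A), x j = x k + ∑' j : A, x j := by
  rw [insert_eq, (hsum.subtype _).tsum_union_disjoint (disjoint_singleton_left.mpr hk)
    (hsum.subtype _), tsum_singleton]

lemma Summable.finite_setOf_le (hsum : Summable x) {δ : ℝ} (hδ : 0 < δ) :
    {k | δ ≤ x k}.Finite := by
  simpa using Filter.eventually_cofinite.mp (hsum.tendsto_cofinite_zero.eventually_lt_const hδ)

lemma isCompact_achSet (hsum : Summable x) : IsCompact (achSet x) := by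
  classical
  let Φ : (ℕ → Bool) → ℝ := fun f => ∑' k, {k | f k}.indicator x k
  have hΦ : Continuous Φ := by
    refine continuous_tsum (fun k => ?_) hsum.abs fun k f => ?_
    · refine (continuous_of_discreteTopology (f := fun b : Bool => if b then x k else 0)).comp
        (continuous_apply k) |>.congr fun f => ?_
      by_cases h : f k <;> simp [h]
    · by_cases h : f k <;> simp [h]
  convert isCompact_range hΦ
  ext t
  constructor
  · rintro ⟨A, rfl⟩
    exact ⟨fun k => decide (k ∈ A), by simp [Φ, tsum_subtype]⟩
  · rintro ⟨f, rfl⟩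
    exact ⟨{k | f k}, (tsum_subtype _ x).symm⟩

lemma achSet_indicator (S : Set ℕ) :
    achSet (S.indicator x) = {t | ∃ A ⊆ S, t = ∑' k : A, x k} := by
  ext t
  constructor
  · rintro ⟨A, rfl⟩
    refine ⟨A ∩ S, inter_subset_right, ?_⟩
    rw [tsum_subtype, tsum_subtype, indicator_indicator]
  · rintro ⟨A, hAS, rfl⟩
    refine ⟨A, ?_⟩
    rw [tsum_subtype, tsum_subtype, indicator_indicator, inter_eq_left.mpr hAS]

lemma isClosed_setOf_exists_subset_tsum (hsum : Summable x) (S : Set ℕ) :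
    IsClosed {t | ∃ A ⊆ S, t = ∑' k : A, x k} :=
  achSet_indicator (x := x) S ▸ (isCompact_achSet (hsum.indicator S)).isClosed

end Subsums

section Interval

variable {x : ℕ → ℝ}

lemma exists_subset_tsum_mem_Ioc_of_forall_le (hsum : Summable x)
    {S : Set ℕ} {γ τ : ℝ} (hγ : 0 < γ) (hτ : 0 ≤ τ) (hτS : τ ≤ ∑' k : S, x k)
    (hS : ∀ k ∈ S, x k ≤ γ) : ∃ A ⊆ S, ∑' k : A, x k ∈ Ioc (τ - γ) τ := by
  classical
  set s : ℕ → ℝ := fun n => ∑ k ∈ Finset.range n, S.indicator x k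
  by_cases h : ∃ n, τ < s n
  · obtain ⟨m, hm⟩ : ∃ m, Nat.find h = m + 1 :=
      Nat.exists_eq_succ_of_ne_zero fun h0 => by
        simpa [h0, s, hτ.not_gt] using Nat.find_spec h
    have hlt : τ < s (m + 1) := hm ▸ Nat.find_spec h
    have hle : s m ≤ τ := not_lt.mp (Nat.find_min h (by omega))
    have hstep : s (m + 1) ≤ s m + γ := by
      simp only [s, Finset.sum_range_succ, add_le_add_iff_left, indicator_apply]
      split_ifs with hmS
      exacts [hS m hmS, hγ.le]
    refine ⟨↑((Finset.range m).filter (· ∈ S)), fun k hk => by simp_all, ?_⟩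
    rw [Finset.tsum_subtype', Finset.sum_filter]
    exact ⟨by simp only [s, indicator_apply] at hlt hstep ⊢; linarith, hle⟩
  · push Not at h
    have hSτ : ∑' k : S, x k ≤ τ := by
      rw [tsum_subtype]
      exact le_of_tendsto' (hsum.indicator S).hasSum.tendsto_sum_nat h
    exact ⟨S, subset_rfl, by linarith, hSτ⟩

/-- Induction removing the largest term `a` of `T`: either `x a ≤ τ` and we recurse on `τ - x a`,
or the terms below `x a` already sum to at least `x a > τ`. -/
lemma exists_subset_tsum_mem_Ioc_of_finset (hx : ∀ n, 0 ≤ x n) (hsum : Summable x) {γ : ℝ}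
    (hγ : 0 < γ) (T : Finset ℕ)
    (hT : ∀ t ∈ T, γ < x t ∧ x t ≤ ∑' k : {k | x k < x t}, x k ∧
      ∀ k, x k < x t → x k ≤ γ ∨ k ∈ T)
    {τ : ℝ} (hτ : 0 ≤ τ) (hτT : τ ≤ ∑' k : ↑({k | x k ≤ γ} ∪ ↑T), x k) :
    ∃ A ⊆ {k | x k ≤ γ} ∪ ↑T, ∑' k : A, x k ∈ Ioc (τ - γ) τ := by
  classical
  induction T using Finset.induction_on_max_value x generalizing τ with
  | empty =>
    rw [Finset.coe_empty, union_empty] at hτT ⊢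
    exact exists_subset_tsum_mem_Ioc_of_forall_le hsum hγ hτ hτT fun k hk => hk
  | insert a s ha hmax ih =>
    obtain ⟨hγa, hblock, hbelow⟩ := hT a (Finset.mem_insert_self a s)
    have hs : ∀ t ∈ s, γ < x t ∧ x t ≤ ∑' k : {k | x k < x t}, x k ∧
        ∀ k, x k < x t → x k ≤ γ ∨ k ∈ s := by
      intro t ht
      obtain ⟨h1, h2, h3⟩ := hT t (Finset.mem_insert_of_mem ht)
      refine ⟨h1, h2, fun k hk => (h3 k hk).imp_right fun hkT => ?_⟩
      exact (Finset.mem_insert.mp hkT).resolve_left fun hka => (hka ▸ hk).not_ge (hmax t ht)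
    have haS : a ∉ {k | x k ≤ γ} ∪ ↑s := by simp [ha, hγa.not_ge]
    have hunion : {k | x k ≤ γ} ∪ ↑(insert a s) = insert a ({k | x k ≤ γ} ∪ ↑s) := by
      ext k; simp only [Finset.coe_insert, mem_union, mem_insert_iff]; tauto
    rw [hunion] at hτT ⊢
    rw [tsum_insert_of_notMem hsum haS] at hτT
    by_cases hτa : x a ≤ τ
    · obtain ⟨A, hA, hAτ⟩ := ih hs (by linarith : 0 ≤ τ - x a) (by linarith)
      refine ⟨insert a A, insert_subset_insert hA, ?_⟩
      rw [tsum_insert_of_notMem hsum fun h => haS (hA h)]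
      constructor <;> linarith [hAτ.1, hAτ.2]
    · have hsub : {k | x k < x a} ⊆ {k | x k ≤ γ} ∪ ↑s := fun k hk =>
        (hbelow k hk).imp_right fun hkT =>
          (Finset.mem_insert.mp hkT).resolve_left fun hka => by
            subst hka; exact lt_irrefl (x k) hk
      have := tsum_subtype_mono_of_nonneg hx hsum hsub
      obtain ⟨A, hA, hAτ⟩ := ih hs hτ (by linarith)
      exact ⟨A, hA.trans (subset_insert a _), hAτ⟩

variable {δ : ℝ}

lemma exists_subset_setOf_lt_tsum_mem_Ioc (hpos : ∀ n, 0 < x n) (hsum : Summable x)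
    (hblock : ∀ v, 0 < v → v < δ → v ≤ ∑' k : {k | x k < v}, x k) {γ τ : ℝ} (hγ : 0 < γ)
    (hτ : 0 ≤ τ) (hτδ : τ ≤ ∑' k : {k | x k < δ}, x k) :
    ∃ A ⊆ {k | x k < δ}, ∑' k : A, x k ∈ Ioc (τ - γ) τ := by
  rcases le_or_gt δ γ with hδγ | hγδ
  · exact exists_subset_tsum_mem_Ioc_of_forall_le hsum hγ hτ hτδ fun k hk => le_trans hk.le hδγ
  have hfin : {k | γ < x k ∧ x k < δ}.Finite :=
    (hsum.finite_setOf_le hγ).subset fun k hk => hk.1.le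
  have hsplit : {k | x k ≤ γ} ∪ ↑hfin.toFinset = {k | x k < δ} := by
    ext k
    simp only [Finite.coe_toFinset, mem_union, mem_ofPred_eq]
    constructor
    · rintro (hk | hk)
      exacts [hk.trans_lt hγδ, hk.2]
    · intro hk
      exact (le_or_gt (x k) γ).imp_right fun h => ⟨h, hk⟩
  rw [← hsplit] at hτδ ⊢
  refine exists_subset_tsum_mem_Ioc_of_finset (fun n => (hpos n).le) hsum hγ _ (fun t ht => ?_)
    hτ hτδ
  rw [Finite.mem_toFinset] at ht
  refine ⟨ht.1, hblock _ (hpos t) ht.2, fun k hk => ?_⟩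
  rw [Finite.mem_toFinset]
  exact (le_or_gt (x k) γ).imp_right fun h => ⟨h, hk.trans ht.2⟩

lemma exists_subset_setOf_lt_tsum_eq (hpos : ∀ n, 0 < x n) (hsum : Summable x)
    (hblock : ∀ v, 0 < v → v < δ → v ≤ ∑' k : {k | x k < v}, x k) {τ : ℝ}
    (hτ : τ ∈ Icc 0 (∑' k : {k | x k < δ}, x k)) :
    ∃ A ⊆ {k | x k < δ}, τ = ∑' k : A, x k := by
  change τ ∈ {t | ∃ A ⊆ {k | x k < δ}, t = ∑' k : A, x k}
  rw [← (isClosed_setOf_exists_subset_tsum hsum _).closure_eq, Metric.mem_closure_iff]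
  intro ε hε
  obtain ⟨A, hA, hAτ⟩ := exists_subset_setOf_lt_tsum_mem_Ioc hpos hsum hblock hε hτ.1 hτ.2
  refine ⟨_, ⟨A, hA, rfl⟩, ?_⟩
  rw [Real.dist_eq, abs_lt]
  constructor <;> linarith [hAτ.1, hAτ.2]

end Interval

section Decomposition

variable {x : ℕ → ℝ} {δ : ℝ}

lemma le_tsum_setOf_lt_of_disjoint_uniqSet (hpos : ∀ n, 0 < x n) (hsum : Summable x)
    (hU : Disjoint (Ioo 0 δ) (uniqSet x)) {v : ℝ} (hv : 0 < v) (hvδ : v < δ) :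
    v ≤ ∑' k : {k | x k < v}, x k := by
  by_contra! hlt
  set L : Set ℕ := {k | x k < v}
  obtain ⟨k₀, hk₀⟩ := (hsum.tendsto_atTop_zero.eventually_lt_const hv).exists
  have hLpos : 0 < ∑' k : L, x k :=
    (hsum.subtype L).tsum_pos (fun k => (hpos k.1).le) ⟨k₀, hk₀⟩ (hpos k₀)
  refine hU.notMem_of_mem_left ⟨hLpos, hlt.trans hvδ⟩ ⟨L, rfl, fun B hB => ?_⟩
  have hBL : B ⊆ L := fun k hk =>
    (le_tsum_subtype_of_nonneg (fun n => (hpos n).le) hsum hk).trans_lt (hB ▸ hlt)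
  by_contra hne
  obtain ⟨j, hjL, hjB⟩ := exists_of_ssubset (hBL.ssubset_of_ne hne)
  have := tsum_subtype_mono_of_nonneg (fun n => (hpos n).le) hsum (insert_subset hjL hBL)
  rw [tsum_insert_of_notMem hsum hjB] at this
  linarith [hpos j]

lemma achSet_eq_biUnion_Icc (hpos : ∀ n, 0 < x n) (hsum : Summable x) (hδ : 0 < δ)
    (hblock : ∀ v, 0 < v → v < δ → v ≤ ∑' k : {k | x k < v}, x k) :
    achSet x = ⋃ F ∈ (hsum.finite_setOf_le hδ).toFinset.powerset,
      Icc (∑ k ∈ F, x k) (∑ k ∈ F, x k + ∑' k : {k | x k < δ}, x k) := by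
  have hx : ∀ n, 0 ≤ x n := fun n => (hpos n).le
  ext t
  simp only [mem_iUnion, Finset.mem_powerset, exists_prop]
  constructor
  · rintro ⟨A, rfl⟩
    have hfin : (A ∩ {k | δ ≤ x k}).Finite :=
      (hsum.finite_setOf_le hδ).subset inter_subset_right
    have hsmall : A \ {k | δ ≤ x k} ⊆ {k | x k < δ} := fun k hk =>
      show x k < δ from not_le.mp hk.2
    refine ⟨hfin.toFinset, fun k hk => by simp_all, ?_⟩
    have hsplit : ∑' k : A, x k =
        ∑' k : ↑(A ∩ {k | δ ≤ x k}), x k + ∑' k : ↑(A \ {k | δ ≤ x k}), x k := by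
      conv_lhs => rw [← inter_union_sdiff A {k | δ ≤ x k}]
      exact (hsum.subtype _).tsum_union_disjoint disjoint_sdiff_inter.symm (hsum.subtype _)
    rw [← Finset.tsum_subtype', Finite.coe_toFinset, hsplit]
    exact ⟨le_add_of_nonneg_right (tsum_nonneg fun k => hx k),
      add_le_add_right (tsum_subtype_mono_of_nonneg hx hsum hsmall) _⟩
  · rintro ⟨F, hF, ht⟩
    obtain ⟨A, hA, hAt⟩ := exists_subset_setOf_lt_tsum_eq hpos hsum hblock
      (τ := t - ∑ k ∈ F, x k) ⟨by linarith [ht.1], by linarith [ht.2]⟩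
    have hdisj : Disjoint (F : Set ℕ) A := by
      refine disjoint_left.mpr fun k hkF hkA => (show x k < δ from hA hkA).not_ge ?_
      simpa using hF hkF
    refine ⟨F ∪ A, ?_⟩
    rw [(hsum.subtype _).tsum_union_disjoint hdisj (hsum.subtype _), Finset.tsum_subtype', ← hAt]
    ring

end Decomposition

lemma finite_connectedComponents_of_eq_biUnion {X ι : Type*} [TopologicalSpace X] {S : Set X}
    (s : Finset ι) {C : ι → Set X} (hC : ∀ i ∈ s, IsPreconnected (C i))
    (hS : S = ⋃ i ∈ s, C i) : Finite (ConnectedComponents S) := by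
  have hsub : ∀ i ∈ s, (ConnectedComponents.mk '' {p : S | (p : X) ∈ C i}).Subsingleton := by
    intro i hi
    have hCS : C i ⊆ S := hS ▸ subset_biUnion_of_mem (u := C) hi
    have hpre : IsPreconnected {p : S | (p : X) ∈ C i} := by
      rw [← Topology.IsInducing.subtypeVal.isPreconnected_image]
      simpa [hCS] using hC i hi
    rintro _ ⟨p, hp, rfl⟩ _ ⟨q, hq, rfl⟩
    exact ConnectedComponents.coe_eq_coe'.mpr (hpre.subset_connectedComponent hq hp)
  rw [← Set.finite_univ_iff]
  refine (s.finite_toSet.biUnion fun i hi => (hsub i hi).finite).subset fun c _ => ?_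
  obtain ⟨p, rfl⟩ := ConnectedComponents.surjective_coe c
  have hp : (p : X) ∈ ⋃ i ∈ s, C i := hS ▸ p.2
  obtain ⟨i, hi, hpi⟩ := mem_iUnion₂.mp hp
  exact mem_biUnion hi ⟨p, hpi, rfl⟩

lemma Set.Finite.exists_pos_disjoint_Ioo {U : Set ℝ} (hU : U.Finite) :
    ∃ δ > 0, Disjoint (Ioo 0 δ) U := by
  obtain ⟨δ, hδ, hball⟩ := Metric.isOpen_iff.mp (hU.sdiff (t := {0})).isClosed.isOpen_compl 0
    (by simp)
  refine ⟨δ, hδ, disjoint_left.mpr fun t ht htU => hball ?_ ⟨htU, ht.1.ne'⟩⟩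
  rw [Metric.mem_ball, Real.dist_eq, sub_zero, abs_of_pos ht.1]
  exact ht.2

section GuthrieNymann

lemma gnSeq_pos (n : ℕ) : 0 < gnSeq n := by
  unfold gnSeq
  split <;> positivity

lemma gnSeq_add_two (n : ℕ) : gnSeq (n + 2) = gnSeq n / 4 := by
  have h1 : (n + 2) % 2 = n % 2 := by omega
  have h2 : (n + 2) / 2 = n / 2 + 1 := by omega
  simp only [gnSeq, h1, h2, pow_succ]
  split <;> ring

lemma gnSeq_add_two_mul (n m : ℕ) : gnSeq (n + 2 * m) = gnSeq n / 4 ^ m := by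
  induction m with
  | zero => simp
  | succ m ih => rw [mul_add_one, ← add_assoc, gnSeq_add_two, ih, pow_succ, div_div]

lemma summable_gnSeq : Summable gnSeq := by
  have hgeom (c : ℝ) : Summable fun k : ℕ => c / 4 ^ k := by
    simpa [div_eq_mul_inv] using
      (summable_geometric_of_lt_one (by norm_num : (0 : ℝ) ≤ 1 / 4) (by norm_num)).mul_left c
  refine Summable.even_add_odd ?_ ?_
  · convert hgeom (gnSeq 0) using 2 with k
    rw [← gnSeq_add_two_mul, zero_add]
  · convert hgeom (gnSeq 1) using 2 with k
    rw [← gnSeq_add_two_mul, add_comm]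

lemma tsum_gnSeq : ∑' n, gnSeq n = 5 / 3 := by
  have h := summable_gnSeq.sum_add_tsum_nat_add 2
  have h0 : gnSeq 0 = 3 / 4 := by norm_num [gnSeq]
  have h1 : gnSeq 1 = 2 / 4 := by norm_num [gnSeq]
  simp only [gnSeq_add_two, tsum_div_const, Finset.sum_range_succ, Finset.sum_range_zero, h0, h1]
    at h
  linarith

lemma tsum_subtype_gnSeq_le {A : Set ℕ} {m : ℕ} (hA : A ⊆ {n | 2 * m ≤ n}) :
    ∑' k : A, gnSeq k ≤ 5 / 3 / 4 ^ m := by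
  have hsplit := (summable_gnSeq.indicator A).sum_add_tsum_nat_add (2 * m)
  rw [Finset.sum_eq_zero fun k hk => indicator_of_notMem (fun hkA => by
    simpa using (Finset.mem_range.mp hk).trans_le (hA hkA)) _, zero_add] at hsplit
  rw [tsum_subtype, ← hsplit, ← tsum_gnSeq, ← tsum_div_const]
  simp_rw [← gnSeq_add_two_mul]
  exact ((summable_nat_add_iff _).mpr (summable_gnSeq.indicator A)).tsum_le_tsum
    (fun n => indicator_le_self' (fun k _ => (gnSeq_pos k).le) _)
    ((summable_nat_add_iff _).mpr summable_gnSeq)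

lemma two_div_four_pow_le_gnSeq {n m : ℕ} (hn : n < 2 * (m + 1)) :
    2 / 4 ^ (m + 1) ≤ gnSeq n := by
  calc (2 : ℝ) / 4 ^ (m + 1) ≤ 2 / 4 ^ (n / 2 + 1) :=
        div_le_div_of_nonneg_left (by norm_num) (by positivity)
          (pow_le_pow_right₀ (by norm_num) (by omega))
    _ ≤ gnSeq n := by unfold gnSeq; split <;> gcongr; norm_num

lemma two_div_four_pow_mem_achSet_gnSeq (m : ℕ) : 2 / 4 ^ (m + 1) ∈ achSet gnSeq := by
  refine ⟨{2 * m + 1}, ?_⟩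
  rw [tsum_singleton]
  have h1 : (2 * m + 1) % 2 = 1 := by omega
  have h2 : (2 * m + 1) / 2 = m := by omega
  simp [gnSeq, h1, h2]

lemma notMem_achSet_gnSeq {m : ℕ} {t : ℝ}
    (ht : t ∈ Ioo (5 / 3 / 4 ^ (m + 1)) (2 / 4 ^ (m + 1))) : t ∉ achSet gnSeq := by
  rintro ⟨A, rfl⟩
  by_cases hA : A ⊆ {n | 2 * (m + 1) ≤ n}
  · linarith [ht.1, tsum_subtype_gnSeq_le hA]
  · obtain ⟨n, hnA, hn⟩ := not_subset.mp hA
    linarith [ht.2, two_div_four_pow_le_gnSeq (not_le.mp hn),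
      le_tsum_subtype_of_nonneg (fun k => (gnSeq_pos k).le) summable_gnSeq hnA]

lemma le_of_two_div_four_pow_mem {C : Set ℝ} (hC : IsPreconnected C) (hCE : C ⊆ achSet gnSeq)
    {a b : ℕ} (ha : 2 / 4 ^ (a + 1) ∈ C) (hb : 2 / 4 ^ (b + 1) ∈ C) : a ≤ b := by
  by_contra! hba
  have hab : (2 : ℝ) / 4 ^ (a + 1) ≤ 1 / 2 / 4 ^ (b + 1) :=
    calc (2 : ℝ) / 4 ^ (a + 1) ≤ 2 / 4 ^ (b + 2) :=
          div_le_div_of_nonneg_left (by norm_num) (by positivity)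
            (pow_le_pow_right₀ (by norm_num) (by omega))
      _ = 1 / 2 / 4 ^ (b + 1) := by rw [pow_succ 4 (b + 1)]; field_simp; norm_num
  have hq : (0 : ℝ) < 4 ^ (b + 1) := by positivity
  have h1 : (5 : ℝ) / 3 / 4 ^ (b + 1) < 11 / 6 / 4 ^ (b + 1) := by
    rw [div_lt_div_iff_of_pos_right hq]; norm_num
  have h2 : (1 : ℝ) / 2 / 4 ^ (b + 1) < 11 / 6 / 4 ^ (b + 1) := by
    rw [div_lt_div_iff_of_pos_right hq]; norm_num
  have h3 : (11 : ℝ) / 6 / 4 ^ (b + 1) < 2 / 4 ^ (b + 1) := by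
    rw [div_lt_div_iff_of_pos_right hq]; norm_num
  exact notMem_achSet_gnSeq (m := b) ⟨h1, h3⟩
    (hCE (hC.Icc_subset ha hb ⟨by linarith, h3.le⟩))

lemma infinite_connectedComponents_achSet_gnSeq :
    Infinite (ConnectedComponents (achSet gnSeq)) := by
  let p : ℕ → achSet gnSeq := fun m =>
    ⟨2 / 4 ^ (m + 1), two_div_four_pow_mem_achSet_gnSeq m⟩
  refine Infinite.of_injective (fun m => ConnectedComponents.mk (p m)) fun a b hab => ?_
  have hC := (isPreconnected_connectedComponent (x := p b)).image _
    continuous_subtype_val.continuousOn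
  have hCE : Subtype.val '' connectedComponent (p b) ⊆ achSet gnSeq := by
    rintro _ ⟨q, -, rfl⟩
    exact q.2
  have ha : (p a : ℝ) ∈ Subtype.val '' connectedComponent (p b) :=
    ⟨p a, ConnectedComponents.coe_eq_coe'.mp hab, rfl⟩
  have hb : (p b : ℝ) ∈ Subtype.val '' connectedComponent (p b) :=
    ⟨p b, mem_connectedComponent, rfl⟩
  exact le_antisymm (le_of_two_div_four_pow_mem hC hCE ha hb)
    (le_of_two_div_four_pow_mem hC hCE hb ha)

end GuthrieNymann

theorem uniqSet_infinite_of_cantorval (x : ℕ → ℝ) (hpos : ∀ n, 0 < x n) (hsum : Summable x)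
    (hC : IsCantorval (achSet x)) :
    (uniqSet x).Infinite := by
  intro hfin
  obtain ⟨δ, hδ, hU⟩ := hfin.exists_pos_disjoint_Ioo
  have : Finite (ConnectedComponents (achSet x)) :=
    finite_connectedComponents_of_eq_biUnion _ (fun _ _ => isPreconnected_Icc)
      (achSet_eq_biUnion_Icc hpos hsum hδ fun _ =>
        le_tsum_setOf_lt_of_disjoint_uniqSet hpos hsum hU)
  obtain ⟨e⟩ := hC
  have := Finite.of_surjective _ (e.continuous.connectedComponentsMap_surjective e.surjective)
  exact not_finite_iff_infinite.mpr infinite_connectedComponents_achSet_gnSeq this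
end
end

section
/- Fix r ≥ 1, set M = 2^{r+1} and let Σ = {∑_{i∈S} c_i : S ⊆ {1,…,r+1}} where (c_1,…,c_{r+1}) = (2^r, 2^{r-1}, …, 4, 3, 2). Suppose x = ∑_{n=1}^∞ a_n/M^n = ∑_{n=1}^∞ b_n/M^n where (a_n), (b_n) ∈ Σ^ℕ and (a_n) ≠ (b_n). Then, after possibly interchanging (a_n) and (b_n), there exists a finite or infinite strictly increasing sequence n_0 < n_1 < n_2 < … of positive integers such that: (1) a_k = b_k for all k < n_0; (2) a_{n_0} = 2+j and b_{n_0} = 3+j for some j ∈ {0,1,…,M−4}; (3) a_{n_k} = M+1 and b_{n_k} = 0 for all odd k; (4) a_{n_k} = 0 and b_{n_k} = M+1 for all even k > 0; (5) a_i ∈ {M−1, M+1} and a_i − b_i = M−1 whenever n_{2k} < i < n_{2k+1}; (6) a_i ∈ {0,2} and b_i − a_i = M−1 whenever n_{2k+1} < i < n_{2k+2}. Moreover x has exactly two such digital representations. -/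
/-!
For two expansions `u`, `v` of the same number, the carry
`c N = M ^ N * ∑_{n < N} (v n - u n) / M ^ (n + 1)` is an integer with
`M * c N = u N - v N + c (N + 1)`, and it equals `M ^ N` times the difference of the tails, so
`|c N| ≤ (M + 1) / (M - 1) < 2`. Every subset sum of the weights lies in `[0, M + 1]` and avoids
`1` and `M`, which leaves very few transitions: `c` stays `0` while the digits agree, moves to
`±1` where they first differ (by one), and from then on stays `±1`, either keeping its sign
(digit difference `M - 1`) or flipping it (digits `M + 1` and `0`). The indices `m k` are those
where `c` changes. A third expansion would have to split off from one of the two at a digit where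
that pair has carry `0` while the other pair has carry `±1`, and the transition table forbids this.
-/

open Set Topology

noncomputable section

open Finset

namespace Nat

variable {p : ℕ → Prop}

lemma coe_lt_encard_iff {k : ℕ} :
    (k : ℕ∞) < (Set.ofPred p).encard ↔ ∀ hf : (Set.ofPred p).Finite, k < #hf.toFinset := by
  rcases (Set.ofPred p).finite_or_infinite with hf | hf
  · rw [hf.encard_eq_coe_toFinset_card, Nat.cast_lt]
    exact ⟨fun h _ => h, fun h => h hf⟩
  · simp [hf]

lemma count_eq_and_not_of_nth_lt_of_lt_nth [DecidablePred p] {q i : ℕ}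
    (hq : (q : ℕ∞) < (Set.ofPred p).encard) (hlo : nth p q < i)
    (hhi : ((q + 1 : ℕ) : ℕ∞) < (Set.ofPred p).encard → i < nth p (q + 1)) :
    count p i = q + 1 ∧ ¬p i := by
  have hlow : q + 1 ≤ count p i :=
    count_nth_succ (coe_lt_encard_iff.mp hq) ▸ count_monotone p hlo
  have hup : count p (i + 1) ≤ q + 1 := by
    by_contra! h
    have hq1 : ((q + 1 : ℕ) : ℕ∞) < (Set.ofPred p).encard :=
      coe_lt_encard_iff.mpr fun hf => h.trans_le (count_le_card hf _)
    have := nth_lt_of_lt_count h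
    have := hhi hq1
    omega
  by_cases hp : p i
  · simp only [count_succ, hp, if_true] at hup; omega
  · simp only [count_succ, hp, if_false] at hup; exact ⟨by omega, hp⟩

end Nat

lemma apply_eq_ite_count {s : ℕ → ℤ} (h0 : s 0 = 0)
    (hstep : ∀ n, s (n + 1) ≠ s n → s (n + 1) = if s n = 0 then 1 else -s n) (n : ℕ) :
    s n = if Nat.count (fun k => s (k + 1) ≠ s k) n = 0 then 0
      else -(-1) ^ Nat.count (fun k => s (k + 1) ≠ s k) n := by
  induction n with
  | zero => simp [h0]
  | succ n ih =>
    rw [Nat.count_succ]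
    by_cases hn : s (n + 1) = s n
    · simp [hn, ih]
    · rw [if_pos hn, hstep n hn, if_neg (Nat.succ_ne_zero _)]
      by_cases hc : Nat.count (fun k => s (k + 1) ≠ s k) n = 0
      · simp [ih, hc]
      · rw [ih, if_neg hc, if_neg (by simp), pow_succ]
        ring

lemma hasSum_div_pow_succ {q : ℝ} (hq : 1 < q) (B : ℝ) :
    HasSum (fun n : ℕ => B / q ^ (n + 1)) (B / (q - 1)) := by
  have hq0 : q ≠ 0 := by positivity
  have hq1 : q - 1 ≠ 0 := sub_ne_zero.mpr hq.ne'
  have h := (hasSum_geometric_of_lt_one (by positivity) (inv_lt_one_of_one_lt₀ hq)).mul_left (B / q)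
  rw [show B / q * (1 - q⁻¹)⁻¹ = B / (q - 1) by field_simp] at h
  refine h.congr_fun fun n => ?_
  rw [inv_pow, pow_succ]
  field_simp

namespace DigitRep

def IsDigit (M d : ℕ) : Prop := d ≤ M + 1 ∧ d ≠ 1 ∧ d ≠ M

lemma isDigit_sum {ι : Type*} [Fintype ι] {M : ℕ} {c : ι → ℕ} (hc : ∀ i, 2 ≤ c i)
    (hsum : ∑ i, c i = M + 1) (S : Finset ι) : IsDigit M (∑ i ∈ S, c i) := by
  classical
  have hne_one : ∀ T : Finset ι, ∑ i ∈ T, c i ≠ 1 := by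
    intro T hT
    obtain rfl | ⟨i, hi⟩ := T.eq_empty_or_nonempty
    · simp at hT
    · have := single_le_sum (fun j _ => Nat.zero_le (c j)) hi
      have := hc i
      omega
  have hcompl := sum_add_sum_compl S c
  refine ⟨hsum ▸ sum_le_univ_sum_of_nonneg fun _ => Nat.zero_le _, hne_one S, fun h => ?_⟩
  exact hne_one Sᶜ (by omega)

lemma sum_range_two_pow_sub (t : ℕ) : ∑ i ∈ Finset.range t, 2 ^ (t + 1 - i) = 2 ^ (t + 2) - 4 := by
  rw [← sum_range_reflect]
  have : ∀ j ∈ Finset.range t, 2 ^ (t + 1 - (t - 1 - j)) = 4 * 2 ^ j := by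
    intro j hj
    rw [Finset.mem_range] at hj
    rw [show t + 1 - (t - 1 - j) = j + 2 by omega, pow_add]; ring
  rw [sum_congr rfl this, ← mul_sum, Nat.geomSum_eq le_rfl, Nat.div_one, pow_add]
  have : 1 ≤ 2 ^ t := Nat.one_le_two_pow
  omega

lemma sum_weights_eq (r : ℕ) (hr : 1 ≤ r) :
    ∑ i ∈ Finset.range (r + 1), (if i = r then 2 else if i = r - 1 then 3 else 2 ^ (r - i)) =
      2 ^ (r + 1) + 1 := by
  obtain ⟨t, rfl⟩ : ∃ t, r = t + 1 := ⟨r - 1, by omega⟩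
  rw [sum_range_succ, sum_range_succ, sum_congr rfl fun i hi => by
    rw [if_neg (by simp at hi; omega), if_neg (by simp at hi; omega)], sum_range_two_pow_sub]
  simp only [if_pos, add_tsub_cancel_right, if_neg (show t ≠ t + 1 by omega)]
  have : 4 ≤ 2 ^ (t + 2) := by
    calc 4 = 2 ^ 2 := rfl
      _ ≤ _ := Nat.pow_le_pow_right two_pos (by omega)
  rw [show t + 1 + 1 = t + 2 by ring]
  omega

lemma isDigit_sum_weights (r : ℕ) (hr : 1 ≤ r) (c : Fin (r + 1) → ℕ)
    (hc : ∀ i : Fin (r + 1),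
      c i = if (i : ℕ) = r then 2 else if (i : ℕ) = r - 1 then 3 else 2 ^ (r - (i : ℕ)))
    (S : Finset (Fin (r + 1))) : IsDigit (2 ^ (r + 1)) (∑ i ∈ S, c i) := by
  refine isDigit_sum (fun i => ?_) ?_ S
  · rw [hc i]
    split_ifs
    · exact le_rfl
    · exact Nat.le_succ 2
    · exact Nat.le_self_pow (by omega) 2
  · simp only [hc]
    exact (Fin.sum_univ_eq_sum_range
      (fun i => if i = r then 2 else if i = r - 1 then 3 else 2 ^ (r - i)) _).trans
      (sum_weights_eq r hr)

def carry (M : ℕ) (u v : ℕ → ℕ) : ℕ → ℤ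
  | 0 => 0
  | N + 1 => M * carry M u v N - u N + v N

variable {M : ℕ} {u v w : ℕ → ℕ}

lemma carry_zero : carry M u v 0 = 0 := rfl

lemma carry_succ (N : ℕ) : carry M u v (N + 1) = M * carry M u v N - u N + v N := rfl

lemma carry_swap (N : ℕ) : carry M v u N = -carry M u v N := by
  induction N with
  | zero => simp [carry_zero]
  | succ N ih => rw [carry_succ, carry_succ, ih]; ring

lemma summable_digits_div_pow (hM : 1 < M) (hu : ∀ n, u n ≤ M + 1) :
    Summable fun n : ℕ => (u n : ℝ) / (M : ℝ) ^ (n + 1) :=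
  (hasSum_div_pow_succ (q := M) (by exact_mod_cast hM) (M + 1)).summable.of_nonneg_of_le
    (fun n => by positivity) fun n => by gcongr; exact_mod_cast hu n

lemma summable_sub_div_pow (hM : 1 < M) (hu : ∀ n, u n ≤ M + 1) (hv : ∀ n, v n ≤ M + 1) :
    Summable fun n : ℕ => ((u n : ℝ) - v n) / (M : ℝ) ^ (n + 1) := by
  simpa only [sub_div] using (summable_digits_div_pow hM hu).sub (summable_digits_div_pow hM hv)

lemma carry_eq_tsum (hM : 1 < M) (hu : ∀ n, u n ≤ M + 1) (hv : ∀ n, v n ≤ M + 1)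
    (h : ∑' n, (u n : ℝ) / (M : ℝ) ^ (n + 1) = ∑' n, (v n : ℝ) / (M : ℝ) ^ (n + 1)) (N : ℕ) :
    (carry M u v N : ℝ) = ∑' n, ((u (N + n) : ℝ) - v (N + n)) / (M : ℝ) ^ (n + 1) := by
  induction N with
  | zero =>
    simp only [carry_zero, Int.cast_zero, zero_add, sub_div]
    rw [(summable_digits_div_pow hM hu).tsum_sub (summable_digits_div_pow hM hv), h, sub_self]
  | succ N ih =>
    have hM0 : (M : ℝ) ≠ 0 := by positivity
    set T := ∑' n, ((u (N + 1 + n) : ℝ) - v (N + 1 + n)) / (M : ℝ) ^ (n + 1)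
    have hshift : ∑' n, ((u (N + (n + 1)) : ℝ) - v (N + (n + 1))) / (M : ℝ) ^ (n + 1 + 1) =
        T / M := by
      rw [← tsum_div_const]
      refine tsum_congr fun n => ?_
      rw [show N + (n + 1) = N + 1 + n by omega, pow_succ, div_div]
    rw [(summable_sub_div_pow hM (fun n => hu (N + n)) (fun n => hv (N + n))).tsum_eq_zero_add,
      hshift] at ih
    simp only [carry, Int.cast_add, Int.cast_sub, Int.cast_mul, Int.cast_natCast, ih, add_zero,
      zero_add, pow_one]
    field_simp
    ring

theorem abs_carry_le_one (hM : 4 ≤ M) (hu : ∀ n, u n ≤ M + 1) (hv : ∀ n, v n ≤ M + 1)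
    (h : ∑' n, (u n : ℝ) / (M : ℝ) ^ (n + 1) = ∑' n, (v n : ℝ) / (M : ℝ) ^ (n + 1)) (N : ℕ) :
    |carry M u v N| ≤ 1 := by
  have hM' : (4 : ℝ) ≤ M := by exact_mod_cast hM
  have hlt : |(carry M u v N : ℝ)| < 2 := by
    rw [carry_eq_tsum (by omega) hu hv h N, ← Real.norm_eq_abs]
    calc _ ≤ ((M : ℝ) + 1) / (M - 1) := tsum_of_norm_bounded (hasSum_div_pow_succ (by linarith) _)
            fun n => ?_
      _ < 2 := by rw [div_lt_iff₀ (by linarith)]; linarith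
    rw [norm_div, Real.norm_eq_abs, norm_pow, Real.norm_natCast]
    gcongr
    exact abs_sub_le_of_nonneg_of_le (by positivity) (by exact_mod_cast hu (N + n))
      (by positivity) (by exact_mod_cast hv (N + n))
  have : |carry M u v N| < 2 := by exact_mod_cast hlt
  omega

lemma carry_eq_zero_of_forall_lt_eq {N : ℕ} (h : ∀ i < N, u i = v i) : carry M u v N = 0 := by
  induction N with
  | zero => rfl
  | succ N ih => simp [carry_succ, ih fun i hi => h i (by omega), h N (by omega)]

theorem carry_transition (hM : 4 ≤ M) (hu : ∀ n, IsDigit M (u n)) (hv : ∀ n, IsDigit M (v n))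
    (hs : ∀ n, |carry M u v n| ≤ 1) (n : ℕ) :
    (carry M u v n = 0 ∧ carry M u v (n + 1) = 0 ∧ u n = v n) ∨
    (carry M u v n = 0 ∧ carry M u v (n + 1) = 1 ∧ v n = u n + 1 ∧ 2 ≤ u n ∧ u n ≤ M - 2) ∨
    (carry M u v n = 0 ∧ carry M u v (n + 1) = -1 ∧ u n = v n + 1 ∧ 2 ≤ v n ∧ v n ≤ M - 2) ∨
    (carry M u v n = 1 ∧ carry M u v (n + 1) = 1 ∧ u n = v n + (M - 1) ∧
      (u n = M - 1 ∨ u n = M + 1)) ∨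
    (carry M u v n = 1 ∧ carry M u v (n + 1) = -1 ∧ u n = M + 1 ∧ v n = 0) ∨
    (carry M u v n = -1 ∧ carry M u v (n + 1) = -1 ∧ v n = u n + (M - 1) ∧
      (u n = 0 ∨ u n = 2)) ∨
    (carry M u v n = -1 ∧ carry M u v (n + 1) = 1 ∧ u n = 0 ∧ v n = M + 1) := by
  have hrec := carry_succ (M := M) (u := u) (v := v) n
  obtain ⟨hu1, hu2, hu3⟩ := hu n
  obtain ⟨hv1, hv2, hv3⟩ := hv n
  rcases Int.abs_le_one_iff.mp (hs n) with h | h | h <;>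
  rcases Int.abs_le_one_iff.mp (hs (n + 1)) with h' | h' | h' <;>
  simp only [h, h', true_and, false_and, false_or, or_false, Int.reduceNeg, reduceCtorEq]
    at hrec ⊢ <;>
  omega

lemma carry_ne_zero_of_le (hM : 4 ≤ M) (hu : ∀ n, IsDigit M (u n)) (hv : ∀ n, IsDigit M (v n))
    (hs : ∀ n, |carry M u v n| ≤ 1) {n k : ℕ} (hn : carry M u v n ≠ 0) (hk : n ≤ k) :
    carry M u v k ≠ 0 := by
  induction k, hk using Nat.le_induction with
  | base => exact hn
  | succ k _ ih => have := carry_transition hM hu hv hs k; omega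

/-- A split of `w` from `u` at `n` would leave, one digit later, carry `±1` against `v` and `∓1`
against `w`, and these force incompatible digits of `u`. -/
lemma eq_of_carry_eq_zero_of_carry_ne_zero (hM : 4 ≤ M) (hu : ∀ n, IsDigit M (u n))
    (hv : ∀ n, IsDigit M (v n)) (hw : ∀ n, IsDigit M (w n)) (hsv : ∀ n, |carry M u v n| ≤ 1)
    (hsw : ∀ n, |carry M u w n| ≤ 1) {n : ℕ} (hw0 : carry M u w n = 0)
    (hv0 : carry M u v n ≠ 0) : u n = w n := by
  have := carry_transition hM hu hv hsv n
  have := carry_transition hM hu hv hsv (n + 1)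
  have := carry_transition hM hu hw hsw n
  have := carry_transition hM hu hw hsw (n + 1)
  omega

lemma eq_of_forall_lt_eq_of_carry_ne_zero (hM : 4 ≤ M) (hu : ∀ n, IsDigit M (u n))
    (hv : ∀ n, IsDigit M (v n)) (hw : ∀ n, IsDigit M (w n)) (hsv : ∀ n, |carry M u v n| ≤ 1)
    (hsw : ∀ n, |carry M u w n| ≤ 1) {N : ℕ} (hlt : ∀ i < N, u i = w i)
    (hN : carry M u v N ≠ 0) : u = w := by
  funext i
  induction i using Nat.strong_induction_on with
  | _ i ih =>
    rcases lt_or_ge i N with hi | hi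
    · exact hlt i hi
    · exact eq_of_carry_eq_zero_of_carry_ne_zero hM hu hv hw hsv hsw
        (carry_eq_zero_of_forall_lt_eq ih) (carry_ne_zero_of_le hM hu hv hsv hN hi)

theorem eq_or_eq_of_carry {a b d : ℕ → ℕ} (hM : 4 ≤ M) (ha : ∀ n, IsDigit M (a n))
    (hb : ∀ n, IsDigit M (b n)) (hd : ∀ n, IsDigit M (d n)) (hab : a ≠ b)
    (hsab : ∀ n, |carry M a b n| ≤ 1) (hsad : ∀ n, |carry M a d n| ≤ 1)
    (hsbd : ∀ n, |carry M b d n| ≤ 1) : d = a ∨ d = b := by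
  classical
  by_contra! hne
  have hex : ∃ n, ¬(b n = a n ∧ d n = a n) := by
    by_contra! h
    exact hab (funext fun n => (h n).1.symm)
  obtain ⟨n, hn, hbelow⟩ : ∃ n, ¬(b n = a n ∧ d n = a n) ∧ ∀ i < n, b i = a i ∧ d i = a i :=
    ⟨Nat.find hex, Nat.find_spec hex, fun i hi => not_not.mp (Nat.find_min hex hi)⟩
  have hsba : ∀ n, |carry M b a n| ≤ 1 := fun n => by rw [carry_swap, abs_neg]; exact hsab n
  have tab := carry_transition hM ha hb hsab n
  have tad := carry_transition hM ha hd hsad n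
  have tbd := carry_transition hM hb hd hsbd n
  have tba := carry_transition hM hb ha hsba n
  have hab0 : carry M a b n = 0 := carry_eq_zero_of_forall_lt_eq fun i hi => (hbelow i hi).1.symm
  have had0 : carry M a d n = 0 := carry_eq_zero_of_forall_lt_eq fun i hi => (hbelow i hi).2.symm
  have hbd0 : carry M b d n = 0 := carry_eq_zero_of_forall_lt_eq fun i hi =>
    (hbelow i hi).1.trans (hbelow i hi).2.symm
  have hba0 : carry M b a n = 0 := by rw [carry_swap, hab0, neg_zero]
  have agree : ∀ {u w : ℕ → ℕ}, u n = w n → (∀ i < n, u i = w i) → ∀ i < n + 1, u i = w i :=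
    fun h hlt i hi => (Nat.lt_succ_iff_lt_or_eq.mp hi).elim (hlt i) (· ▸ h)
  by_cases h1 : a n = b n
  · exact hab (eq_of_forall_lt_eq_of_carry_ne_zero hM ha hd hb hsad hsab
      (agree h1 fun i hi => (hbelow i hi).1.symm) (by omega))
  by_cases h2 : a n = d n
  · exact hne.1 (eq_of_forall_lt_eq_of_carry_ne_zero hM ha hb hd hsab hsad
      (agree h2 fun i hi => (hbelow i hi).2.symm) (by omega)).symm
  by_cases h3 : b n = d n
  · exact hne.2 (eq_of_forall_lt_eq_of_carry_ne_zero hM hb ha hd hsba hsbd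
      (agree h3 fun i hi => (hbelow i hi).1.trans (hbelow i hi).2.symm) (by omega)).symm
  omega

lemma eq_of_carry_eq_zero_of_carry_succ_ne_zero (hM : 4 ≤ M) (hu : ∀ n, IsDigit M (u n))
    (hv : ∀ n, IsDigit M (v n)) (hs : ∀ n, |carry M u v n| ≤ 1) {n n' : ℕ}
    (h0 : carry M u v n = 0) (h1 : carry M u v (n + 1) ≠ 0) (h0' : carry M u v n' = 0)
    (h1' : carry M u v (n' + 1) ≠ 0) : n = n' := by
  by_contra hne
  rcases Nat.lt_or_gt_of_ne hne with h | h
  · exact carry_ne_zero_of_le hM hu hv hs h1 h h0'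
  · exact carry_ne_zero_of_le hM hu hv hs h1' h h0

lemma carry_succ_ne_neg_one_or_swap (hM : 4 ≤ M) (hu : ∀ n, IsDigit M (u n))
    (hv : ∀ n, IsDigit M (v n)) (hs : ∀ n, |carry M u v n| ≤ 1) :
    (∀ n, carry M u v n = 0 → carry M u v (n + 1) ≠ -1) ∨
      (∀ n, carry M v u n = 0 → carry M v u (n + 1) ≠ -1) := by
  by_cases h : ∀ n, carry M u v n = 0 → carry M u v (n + 1) ≠ -1
  · exact Or.inl h
  push Not at h
  obtain ⟨n₁, h0, h1⟩ := h
  refine Or.inr fun n hn hn1 => ?_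
  rw [carry_swap] at hn hn1
  obtain rfl := eq_of_carry_eq_zero_of_carry_succ_ne_zero hM hu hv hs (n := n₁) (n' := n) h0
    (by omega) (by omega) (by omega)
  omega

lemma exists_carry_succ_ne (hM : 4 ≤ M) (hu : ∀ n, IsDigit M (u n))
    (hv : ∀ n, IsDigit M (v n)) (hs : ∀ n, |carry M u v n| ≤ 1) (hne : u ≠ v) :
    ∃ n, carry M u v (n + 1) ≠ carry M u v n := by
  by_contra! h
  have hzero : ∀ n, carry M u v n = 0 := fun n => Nat.rec carry_zero (fun n ih => (h n).trans ih) n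
  refine hne (funext fun n => ?_)
  have := carry_transition hM hu hv hs n
  have := hzero n
  have := hzero (n + 1)
  omega

lemma carry_eq_of_count (hM : 4 ≤ M) (hu : ∀ n, IsDigit M (u n))
    (hv : ∀ n, IsDigit M (v n)) (hs : ∀ n, |carry M u v n| ≤ 1)
    (horient : ∀ n, carry M u v n = 0 → carry M u v (n + 1) ≠ -1) (i : ℕ) :
    (Nat.count (fun n => carry M u v (n + 1) ≠ carry M u v n) i = 0 → carry M u v i = 0) ∧
    (Odd (Nat.count (fun n => carry M u v (n + 1) ≠ carry M u v n) i) → carry M u v i = 1) ∧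
    (Even (Nat.count (fun n => carry M u v (n + 1) ≠ carry M u v n) i) →
      Nat.count (fun n => carry M u v (n + 1) ≠ carry M u v n) i ≠ 0 → carry M u v i = -1) := by
  rw [apply_eq_ite_count (s := carry M u v) carry_zero (fun n hn => by
    have := carry_transition hM hu hv hs n
    have := horient n
    split_ifs <;> omega) i]
  refine ⟨fun h => if_pos h, fun h => ?_, fun h h0 => by rw [if_neg h0, h.neg_one_pow]⟩
  rw [if_neg (by rintro h0; rw [h0] at h; exact Nat.not_odd_zero h), h.neg_one_pow, neg_neg]

def IsAlternatingPattern (M : ℕ) (a b : ℕ → ℕ) (L : ℕ∞) (m : ℕ → ℕ) : Prop :=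
  0 < L ∧
  (∀ k : ℕ, ((k + 1 : ℕ) : ℕ∞) < L → m k < m (k + 1)) ∧
  (∀ i : ℕ, i < m 0 → a i = b i) ∧
  (∃ j : ℕ, j ≤ M - 4 ∧ a (m 0) = 2 + j ∧ b (m 0) = 3 + j) ∧
  (∀ k : ℕ, Odd k → (k : ℕ∞) < L → a (m k) = M + 1 ∧ b (m k) = 0) ∧
  (∀ k : ℕ, Even k → 0 < k → (k : ℕ∞) < L → a (m k) = 0 ∧ b (m k) = M + 1) ∧
  (∀ k i : ℕ, ((2 * k : ℕ) : ℕ∞) < L → m (2 * k) < i →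
    (((2 * k + 1 : ℕ) : ℕ∞) < L → i < m (2 * k + 1)) →
    a i ∈ ({M - 1, M + 1} : Set ℕ) ∧ a i = b i + (M - 1)) ∧
  (∀ k i : ℕ, ((2 * k + 1 : ℕ) : ℕ∞) < L → m (2 * k + 1) < i →
    (((2 * k + 2 : ℕ) : ℕ∞) < L → i < m (2 * k + 2)) →
    a i ∈ ({0, 2} : Set ℕ) ∧ b i = a i + (M - 1))

theorem exists_isAlternatingPattern (hM : 4 ≤ M) (hu : ∀ n, IsDigit M (u n))
    (hv : ∀ n, IsDigit M (v n)) (hs : ∀ n, |carry M u v n| ≤ 1) (hne : u ≠ v)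
    (horient : ∀ n, carry M u v n = 0 → carry M u v (n + 1) ≠ -1) :
    ∃ L m, IsAlternatingPattern M u v L m := by
  set P : ℕ → Prop := fun n => carry M u v (n + 1) ≠ carry M u v n
  have hval := carry_eq_of_count hM hu hv hs horient
  have hex := exists_carry_succ_ne hM hu hv hs hne
  have hnth : ∀ k : ℕ, (k : ℕ∞) < (Set.ofPred P).encard →
      Nat.count P (Nat.nth P k) = k ∧ P (Nat.nth P k) := fun k hk =>
    ⟨Nat.count_nth (Nat.coe_lt_encard_iff.mp hk), Nat.nth_mem k (Nat.coe_lt_encard_iff.mp hk)⟩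
  have hL : 0 < (Set.ofPred P).encard := Set.encard_pos.mpr hex
  refine ⟨_, Nat.nth P, hL, fun k hk => Nat.nth_lt_nth' k.lt_succ_self
    (Nat.coe_lt_encard_iff.mp hk), fun i hi => ?_, ?_, fun k hk hkL => ?_,
    fun k hk _ hkL => ?_, fun k i hq hlo hhi => ?_, fun k i hq hlo hhi => ?_⟩
  · have := carry_transition hM hu hv hs i
    have := (hval i).1 ((Nat.count_eq_zero hex).mpr hi.le)
    have := (hval (i + 1)).1 ((Nat.count_eq_zero hex).mpr hi)
    omega
  · obtain ⟨h0, hP⟩ := hnth 0 (by simpa using hL)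
    have := carry_transition hM hu hv hs (Nat.nth P 0)
    have := (hval _).1 h0
    have := horient (Nat.nth P 0)
    exact ⟨u (Nat.nth P 0) - 2, by omega, by omega, by omega⟩
  · obtain ⟨hc, hP⟩ := hnth k hkL
    have := carry_transition hM hu hv hs (Nat.nth P k)
    have := (hval _).2.1 (hc ▸ hk)
    omega
  · obtain ⟨hc, hP⟩ := hnth k hkL
    have := carry_transition hM hu hv hs (Nat.nth P k)
    have := (hval _).2.2 (hc ▸ hk) (show Nat.count P _ ≠ 0 by omega)
    omega
  · obtain ⟨hc, hP⟩ := Nat.count_eq_and_not_of_nth_lt_of_lt_nth hq hlo hhi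
    have : carry M u v (i + 1) = carry M u v i := not_not.mp hP
    have := carry_transition hM hu hv hs i
    have := (hval i).2.1 (hc ▸ odd_two_mul_add_one k)
    simp only [Set.mem_insert_iff, Set.mem_singleton_iff]
    omega
  · obtain ⟨hc, hP⟩ := Nat.count_eq_and_not_of_nth_lt_of_lt_nth hq hlo hhi
    have : carry M u v (i + 1) = carry M u v i := not_not.mp hP
    have := carry_transition hM hu hv hs i
    have := (hval i).2.2 (hc ▸ ⟨k + 1, by ring⟩) (show Nat.count P _ ≠ 0 by omega)
    simp only [Set.mem_insert_iff, Set.mem_singleton_iff]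
    omega

end DigitRep

open DigitRep

theorem gnj_two_representations (r : ℕ) (hr : 1 ≤ r) (M : ℕ) (hM : M = 2 ^ (r + 1))
    (c : Fin (r + 1) → ℕ)
    (hc : ∀ i : Fin (r + 1),
      c i = if (i : ℕ) = r then 2 else if (i : ℕ) = r - 1 then 3 else 2 ^ (r - (i : ℕ)))
    (Sig : Set ℕ) (hSig : Sig = {s : ℕ | ∃ S : Finset (Fin (r + 1)), s = ∑ i ∈ S, c i})
    (a b : ℕ → ℕ) (ha : ∀ n, a n ∈ Sig) (hb : ∀ n, b n ∈ Sig) (hab : a ≠ b)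
    (x : ℝ) (hax : x = ∑' n : ℕ, (a n : ℝ) / (M : ℝ) ^ (n + 1))
    (hbx : x = ∑' n : ℕ, (b n : ℝ) / (M : ℝ) ^ (n + 1)) :
    (∃ a' b' : ℕ → ℕ, ((a' = a ∧ b' = b) ∨ (a' = b ∧ b' = a)) ∧
      ∃ (L : ℕ∞) (m : ℕ → ℕ), 0 < L ∧
        -- the indices n₀ < n₁ < n₂ < … (those `m k` with `k < L`) are strictly increasing
        (∀ k : ℕ, ((k + 1 : ℕ) : ℕ∞) < L → m k < m (k + 1)) ∧
        -- (1) aₖ = bₖ for k < n₀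
        (∀ i : ℕ, i < m 0 → a' i = b' i) ∧
        -- (2) a_{n₀} = 2 + j and b_{n₀} = 3 + j for some j ∈ {0, 1, …, M - 4}
        (∃ j : ℕ, j ≤ M - 4 ∧ a' (m 0) = 2 + j ∧ b' (m 0) = 3 + j) ∧
        -- (3) a_{nₖ} = M + 1 and b_{nₖ} = 0 for odd k
        (∀ k : ℕ, Odd k → (k : ℕ∞) < L → a' (m k) = M + 1 ∧ b' (m k) = 0) ∧
        -- (4) a_{nₖ} = 0 and b_{nₖ} = M + 1 for even k > 0
        (∀ k : ℕ, Even k → 0 < k → (k : ℕ∞) < L → a' (m k) = 0 ∧ b' (m k) = M + 1) ∧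
        -- (5) aᵢ ∈ {M - 1, M + 1} and aᵢ - bᵢ = M - 1 whenever n_{2k} < i < n_{2k+1}
        (∀ k i : ℕ, ((2 * k : ℕ) : ℕ∞) < L → m (2 * k) < i →
          (((2 * k + 1 : ℕ) : ℕ∞) < L → i < m (2 * k + 1)) →
          a' i ∈ ({M - 1, M + 1} : Set ℕ) ∧ a' i = b' i + (M - 1)) ∧
        -- (6) aᵢ ∈ {0, 2} and bᵢ - aᵢ = M - 1 whenever n_{2k+1} < i < n_{2k+2}
        (∀ k i : ℕ, ((2 * k + 1 : ℕ) : ℕ∞) < L → m (2 * k + 1) < i →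
          (((2 * k + 2 : ℕ) : ℕ∞) < L → i < m (2 * k + 2)) →
          a' i ∈ ({0, 2} : Set ℕ) ∧ b' i = a' i + (M - 1))) ∧
    -- moreover, x has exactly two digital representations
    (∀ d : ℕ → ℕ, (∀ n, d n ∈ Sig) → x = ∑' n : ℕ, (d n : ℝ) / (M : ℝ) ^ (n + 1) →
      d = a ∨ d = b) := by
  subst hM hSig
  have hM : 4 ≤ 2 ^ (r + 1) := Nat.pow_le_pow_right two_pos (by omega : 2 ≤ r + 1)
  have hdigit : ∀ {d : ℕ → ℕ}, (∀ n, d n ∈ {s | ∃ S, s = ∑ i ∈ S, c i}) →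
      ∀ n, IsDigit (2 ^ (r + 1)) (d n) := fun hd n => by
    obtain ⟨S, hS⟩ := hd n
    exact hS ▸ isDigit_sum_weights r hr c hc S
  have hcarry : ∀ {d e : ℕ → ℕ}, (∀ n, IsDigit (2 ^ (r + 1)) (d n)) →
      (∀ n, IsDigit (2 ^ (r + 1)) (e n)) → x = ∑' n, (d n : ℝ) / (2 ^ (r + 1) : ℕ) ^ (n + 1) →
      x = ∑' n, (e n : ℝ) / (2 ^ (r + 1) : ℕ) ^ (n + 1) → ∀ n, |carry (2 ^ (r + 1)) d e n| ≤ 1 :=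
    fun hd he hdx hex => abs_carry_le_one hM (fun n => (hd n).1) (fun n => (he n).1)
      (hdx.symm.trans hex)
  have hsab := hcarry (hdigit ha) (hdigit hb) hax hbx
  refine ⟨?_, fun d hd hdx => eq_or_eq_of_carry hM (hdigit ha) (hdigit hb) (hdigit hd) hab hsab
    (hcarry (hdigit ha) (hdigit hd) hax hdx) (hcarry (hdigit hb) (hdigit hd) hbx hdx)⟩
  rcases carry_succ_ne_neg_one_or_swap hM (hdigit ha) (hdigit hb) hsab with horient | horient
  · exact ⟨a, b, Or.inl ⟨rfl, rfl⟩,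
      exists_isAlternatingPattern hM (hdigit ha) (hdigit hb) hsab hab horient⟩
  · exact ⟨b, a, Or.inr ⟨rfl, rfl⟩, exists_isAlternatingPattern hM (hdigit hb) (hdigit ha)
      (hcarry (hdigit hb) (hdigit ha) hbx hax) hab.symm horient⟩
end
end

section
/- Let (x_n) be a summable sequence of real numbers and define f : {0,1}^ℕ → ℝ by f((ε_n)) = ∑_{n=1}^∞ ε_n x_n. If the achievement set E(x_n) has nonempty interior in ℝ, then f is semi-open. -/
open Set Topology

noncomputable section

/-- The natural map from the Cantor space to `ℝ` given by `(εₙ) ↦ ∑ εₙ xₙ`. -/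
def sumMap (x : ℕ → ℝ) (ε : ℕ → Bool) : ℝ := ∑' n : ℕ, if ε n then x n else 0

/-- A function on the Cantor space is semi-open if the image of every nonempty open set
has nonempty interior in `ℝ`. -/
def SemiOpen (f : (ℕ → Bool) → ℝ) : Prop :=
  ∀ V : Set (ℕ → Bool), IsOpen V → V.Nonempty → (interior (f '' V)).Nonempty

/-!
Every nonempty open set of the Cantor space contains a cylinder `[ε₀ ↾ N]`, whose image under
`sumMap x` is a translate of the compact set `K = sumMap x '' [0 ↾ N]`, the achievement set of the
tail `(x_n)_{n ≥ N}`. The achievement set of `x` is covered by the finitely many translates of `K`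
by subsums of `x_0, …, x_{N-1}`, so by the Baire category theorem one of them, hence `K` itself,
has nonempty interior.
-/

open PiNat Pointwise

theorem exists_nonempty_interior_of_subset_iUnion_isClosed {X ι : Type*} [TopologicalSpace X]
    [BaireSpace X] [Countable ι] {s : Set X} {t : ι → Set X} (ht : ∀ i, IsClosed (t i))
    (hst : s ⊆ ⋃ i, t i) (hs : (interior s).Nonempty) : ∃ i, (interior (t i)).Nonempty := by
  by_contra! h
  have hmeagre : IsMeagre (⋃ i, t i) :=
    isMeagre_iUnion fun i => ((ht i).isNowhereDense_iff.mpr (h i)).isMeagre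
  exact not_isMeagre_of_isOpen isOpen_interior hs (hmeagre.mono (interior_subset.trans hst))

theorem PiNat.exists_cylinder_subset {E : ℕ → Type*} [∀ n, TopologicalSpace (E n)]
    [∀ n, DiscreteTopology (E n)] {U : Set (∀ n, E n)} (hU : IsOpen U) {x : ∀ n, E n}
    (hx : x ∈ U) : ∃ N, cylinder x N ⊆ U := by
  obtain ⟨_, ⟨y, N, rfl⟩, hxy, hyU⟩ :=
    (isTopologicalBasis_cylinders E).exists_subset_of_mem_open hx hU
  exact ⟨N, mem_cylinder_iff_eq.1 hxy ▸ hyU⟩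

theorem PiNat.isClosed_cylinder {E : ℕ → Type*} [∀ n, TopologicalSpace (E n)]
    [∀ n, DiscreteTopology (E n)] (x : ∀ n, E n) (N : ℕ) : IsClosed (cylinder x N) := by
  rw [cylinder_eq_pi]
  exact isClosed_set_pi fun _ _ => isClosed_discrete _

section sumMap

variable {x : ℕ → ℝ}

theorem summable_ite_bool (hx : Summable x) (ε : ℕ → Bool) :
    Summable fun n => if ε n then x n else 0 := by
  have : (fun n => if ε n then x n else 0) = {n | ε n}.indicator x := by
    ext n
    simp [indicator_apply]
  exact this ▸ hx.indicator _

theorem continuous_sumMap_of_summable (hx : Summable x) : Continuous (sumMap x) := by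
  refine continuous_tsum (fun n => ?_) hx.abs fun n ε => ?_
  · exact (continuous_of_discreteTopology (f := fun b : Bool => if b then x n else 0)).comp
      (continuous_apply n)
  · split_ifs <;> simp

theorem achSet_eq_range_sumMap : achSet x = range (sumMap x) := by
  classical
  ext t
  constructor
  · rintro ⟨A, rfl⟩
    refine ⟨fun n => decide (n ∈ A), ?_⟩
    simp [sumMap, tsum_subtype, indicator_apply]
  · rintro ⟨ε, rfl⟩
    refine ⟨{n | ε n}, ?_⟩
    simp [sumMap, tsum_subtype, indicator_apply]

theorem sumMap_eq_sum_add_sumMap (hx : Summable x) (ε : ℕ → Bool) (N : ℕ) :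
    sumMap x ε = (∑ i : Fin N, if ε i then x i else 0) + sumMap x (fun n => N ≤ n && ε n) := by
  have htail := (summable_ite_bool hx fun n => N ≤ n && ε n).sum_add_tsum_nat_add N
  rw [sumMap, sumMap, ← (summable_ite_bool hx ε).sum_add_tsum_nat_add N, ← htail,
    Fin.sum_univ_eq_sum_range (fun n => if ε n then x n else 0)]
  have hhead : ∑ n ∈ Finset.range N, (if N ≤ n && ε n then x n else 0) = 0 :=
    Finset.sum_eq_zero fun n hn => by simp [Finset.mem_range.1 hn]
  rw [hhead, zero_add]
  simp

theorem image_cylinder_sumMap (hx : Summable x) (ε₀ : ℕ → Bool) (N : ℕ) :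
    sumMap x '' cylinder ε₀ N =
      (∑ i : Fin N, if ε₀ i then x i else 0) +ᵥ sumMap x '' cylinder (fun _ => false) N := by
  ext t
  constructor
  · rintro ⟨ε, hε, rfl⟩
    have hhead : (∑ i : Fin N, if ε i then x i else 0) = ∑ i : Fin N, if ε₀ i then x i else 0 :=
      Finset.sum_congr rfl fun i _ => by rw [hε i i.isLt]
    rw [sumMap_eq_sum_add_sumMap hx ε N, hhead]
    exact vadd_mem_vadd_set ⟨_, fun i hi => by simp [hi], rfl⟩
  · rintro ⟨_, ⟨ε, hε, rfl⟩, rfl⟩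
    refine ⟨fun n => if n < N then ε₀ n else ε n, fun i hi => by simp [hi], ?_⟩
    rw [sumMap_eq_sum_add_sumMap hx _ N]
    congr 2
    · simp
    · ext n
      rcases lt_or_ge n N with hn | hn
      · simp [hn, hε n hn]
      · simp [hn, not_lt.2 hn]

end sumMap

theorem sumMap_semiOpen (x : ℕ → ℝ) (hsum : Summable x)
    (hint : (interior (achSet x)).Nonempty) :
    SemiOpen (sumMap x) := by
  rintro V hV ⟨ε₀, hε₀⟩
  obtain ⟨N, hN⟩ := exists_cylinder_subset hV hε₀
  set K := sumMap x '' cylinder (fun _ => false) N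
  have hK : IsClosed K :=
    ((isClosed_cylinder _ N).isCompact.image (continuous_sumMap_of_summable hsum)).isClosed
  have hcover : achSet x ⊆ ⋃ p : Fin N → Bool, (∑ i, if p i then x i else 0) +ᵥ K := by
    rw [achSet_eq_range_sumMap]
    rintro _ ⟨ε, rfl⟩
    refine mem_iUnion.2 ⟨fun i => ε i, ?_⟩
    exact image_cylinder_sumMap hsum ε N ▸ mem_image_of_mem _ (self_mem_cylinder ε N)
  obtain ⟨p, hp⟩ :=
    exists_nonempty_interior_of_subset_iUnion_isClosed (fun p => hK.vadd _) hcover hint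
  rw [interior_vadd, vadd_set_nonempty] at hp
  have hcyl : (interior (sumMap x '' cylinder ε₀ N)).Nonempty := by
    rw [image_cylinder_sumMap hsum, interior_vadd]
    exact hp.vadd_set
  exact hcyl.mono (interior_mono (image_mono hN))
end
end

section
/- Let (x_n) be a summable sequence of positive real numbers. Then the uniqueness set U(x_n) is a coanalytic subset of ℝ (i.e., its complement ℝ ∖ U(x_n) is an analytic set); in particular, U(x_n) has the Baire property in ℝ. -/
open Set Topology symmDiff

noncomputable section

/-- A set has the Baire property if it is the symmetric difference of an open set
and a meager set. -/
def HasBaireProp {α : Type*} [TopologicalSpace α] (A : Set α) : Prop :=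
  ∃ U M : Set α, IsOpen U ∧ IsMeagre M ∧ A = U ∆ M

namespace UniqAux

open scoped Classical

variable (x : ℕ → ℝ)

/-- Sum over a boolean-indexed subset. -/
def g (a : ℕ → Bool) : ℝ := ∑' n, if a n then x n else 0

lemma g_continuous (hsum : Summable x) (hpos : ∀ n, 0 < x n) :
    Continuous (g x) := by
  apply continuous_tsum (u := fun n => x n)
  · intro n
    exact (continuous_of_discreteTopology
      (f := fun b : Bool => if b then x n else 0)).comp (continuous_apply n)
  · exact hsum
  · intro n a
    by_cases h : a n <;> simp [h, (hpos n).le, abs_of_nonneg]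

lemma tsum_eq_g (A : Set ℕ) :
    (∑' n : A, x n) = g x (fun n => decide (n ∈ A)) := by
  rw [tsum_subtype, g]
  congr 1
  ext n
  by_cases h : n ∈ A
  · simp [h, Set.indicator_apply]
  · simp [h, Set.indicator_apply]

lemma uniq_iff (t : ℝ) :
    (∃! A : Set ℕ, t = ∑' n : A, x n) ↔ ∃! a : ℕ → Bool, t = g x a := by
  constructor
  · rintro ⟨A, hA, hu⟩
    refine ⟨fun n => decide (n ∈ A), ?_, ?_⟩
    · show t = g x (fun n => decide (n ∈ A))
      rw [← tsum_eq_g]; exact hA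
    intro b hb
    have hb' : t = ∑' n : ({n | b n = true} : Set ℕ), x n := by
      rw [tsum_eq_g]
      convert hb using 3 with n
      simp
    have hBA : ({n | b n = true} : Set ℕ) = A := hu _ hb'
    funext n
    have hiff : b n = true ↔ n ∈ A := by
      rw [← hBA]; rfl
    by_cases h : n ∈ A
    · rw [decide_eq_true h]
      exact hiff.2 h
    · rw [decide_eq_false h]
      rcases Bool.eq_false_or_eq_true (b n) with hb0 | hb0
      · exact absurd (hiff.1 hb0) h
      · exact hb0
  · rintro ⟨a, ha, hu⟩
    refine ⟨{n | a n = true}, ?_, ?_⟩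
    · show t = ∑' n : ({n | a n = true} : Set ℕ), x n
      rw [tsum_eq_g]
      convert ha using 3 with n
      simp
    · intro B hB
      have hBa : (fun n => decide (n ∈ B)) = a := by
        apply hu
        rw [← tsum_eq_g]; exact hB
      ext n
      have hn := congrFun hBa n
      constructor
      · intro h
        show a n = true
        rw [← hn, decide_eq_true h]
      · intro h
        have han : a n = true := h
        by_contra hnB
        rw [← hn, decide_eq_false hnB] at han
        exact Bool.false_ne_true han

/-- The "doubly represented" pieces. -/
def K (n : ℕ) : Set ((ℕ → Bool) × (ℕ → Bool)) :=
  {p | p.1 n ≠ p.2 n} ∩ {p | g x p.1 = g x p.2}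

lemma K_isCompact (hsum : Summable x) (hpos : ∀ n, 0 < x n) (n : ℕ) :
    IsCompact (K x n) := by
  have hg := g_continuous x hsum hpos
  have h1 : IsClosed {p : (ℕ → Bool) × (ℕ → Bool) | p.1 n ≠ p.2 n} := by
    have hc : Continuous fun p : (ℕ → Bool) × (ℕ → Bool) => (p.1 n, p.2 n) :=
      ((continuous_apply n).comp continuous_fst).prodMk
        ((continuous_apply n).comp continuous_snd)
    exact (isClosed_discrete {q : Bool × Bool | q.1 ≠ q.2}).preimage hc
  have h2 : IsClosed {p : (ℕ → Bool) × (ℕ → Bool) | g x p.1 = g x p.2} :=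
    isClosed_eq (hg.comp continuous_fst) (hg.comp continuous_snd)
  exact (h1.inter h2).isCompact

lemma uniqSet_eq :
    uniqSet x = Set.range (g x) \ ⋃ n, (fun p : (ℕ → Bool) × (ℕ → Bool) => g x p.1) '' K x n := by
  ext t
  rw [uniqSet, Set.mem_setOf_eq, uniq_iff]
  constructor
  · rintro ⟨a, ha, hu⟩
    refine ⟨⟨a, ha.symm⟩, ?_⟩
    intro ht
    rw [Set.mem_iUnion] at ht
    obtain ⟨n, p, ⟨hne, heq⟩, hgt⟩ := ht
    have h1 : p.1 = a := hu _ hgt.symm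
    have heq' : g x p.1 = g x p.2 := heq
    have h2 : p.2 = a := hu _ (show t = g x p.2 by rw [← heq']; exact hgt.symm)
    exact hne (by rw [h1, h2])
  · rintro ⟨⟨a, ha⟩, hnot⟩
    refine ⟨a, ha.symm, ?_⟩
    intro b hb
    by_contra hne
    obtain ⟨n, hn⟩ := Function.ne_iff.1 hne
    refine hnot ?_
    rw [Set.mem_iUnion]
    refine ⟨n, (b, a), ⟨hn, ?_⟩, hb.symm⟩
    show g x b = g x a
    rw [← hb, ha]

lemma uniqSet_measurable (hsum : Summable x) (hpos : ∀ n, 0 < x n) :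
    MeasurableSet (uniqSet x) := by
  rw [uniqSet_eq]
  have hg := g_continuous x hsum hpos
  refine MeasurableSet.diff ?_ ?_
  · exact (isCompact_range hg).isClosed.measurableSet
  · refine MeasurableSet.iUnion fun n => ?_
    exact (((K_isCompact x hsum hpos n).image (hg.comp continuous_fst))).isClosed.measurableSet

end UniqAux

theorem uniqSet_coanalytic (x : ℕ → ℝ) (hpos : ∀ n, 0 < x n) (hsum : Summable x) :
    MeasureTheory.AnalyticSet (uniqSet x)ᶜ ∧ HasBaireProp (uniqSet x) := by
  have hm : MeasurableSet (uniqSet x) := UniqAux.uniqSet_measurable x hsum hpos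
  constructor
  · exact hm.compl.analyticSet
  · obtain ⟨U, hU, heq⟩ := hm.baireMeasurableSet.residualEq_isOpen
    refine ⟨U, U ∆ uniqSet x, hU, ?_, ?_⟩
    · rw [IsMeagre]
      refine Filter.mem_of_superset heq ?_
      intro a ha
      have ha' : a ∈ uniqSet x ↔ a ∈ U := Eq.to_iff ha
      simp only [Set.mem_compl_iff, Set.mem_symmDiff]
      tauto
    · rw [symmDiff_symmDiff_cancel_left]

end
end

section
/- Let E ⊆ ℝ be a compact set. Then the following are equivalent: (i) a subset of E is meager in the subspace E if and only if it is meager in ℝ; (ii) every nonempty relatively open subset of E contains a nonempty open interval of ℝ. -/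
open Set Topology

noncomputable section

/-- In a Baire space, a nonempty open set is not meagre. -/
lemma aux_not_meagre {X : Type*} [TopologicalSpace X] [BaireSpace X]
    {V : Set X} (hV : IsOpen V) (hne : V.Nonempty) : ¬ IsMeagre V := by
  intro hm
  have hd : Dense Vᶜ := dense_of_mem_residual hm
  obtain ⟨x, hx⟩ := hd.inter_open_nonempty V hV hne
  exact hx.2 hx.1

lemma aux_nwd_meagre {X : Type*} [TopologicalSpace X] {s : Set X}
    (h : IsNowhereDense s) : IsMeagre s := by
  rw [isMeagre_iff_countable_union_isNowhereDense]
  exact ⟨{s}, by simpa using h, countable_singleton s, by simp⟩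

theorem meagre_subspace_iff_meagre_real (E : Set ℝ) (hE : IsCompact E) :
    ((∀ A : Set ℝ, A ⊆ E → (IsMeagre {p : E | (p : ℝ) ∈ A} ↔ IsMeagre A)) ↔
      (∀ V : Set E, IsOpen V → V.Nonempty →
        ∃ a b : ℝ, a < b ∧ Set.Ioo a b ⊆ Subtype.val '' V)) := by
  have hEc : IsClosed E := hE.isClosed
  haveI : CompactSpace E := isCompact_iff_compactSpace.mp hE
  have hemb : Topology.IsEmbedding ((↑) : E → ℝ) := Topology.IsEmbedding.subtypeVal
  constructor
  · -- (i) → (ii)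
    intro h V hVopen hVne
    set A : Set ℝ := Subtype.val '' V with hAdef
    have hAE : A ⊆ E := by rintro x ⟨p, _, rfl⟩; exact p.2
    have hset : {p : E | (p : ℝ) ∈ A} = V := by
      ext p
      simp only [mem_setOf_eq, hAdef]
      exact ⟨fun ⟨q, hq, hqp⟩ => Subtype.ext hqp ▸ hq, fun hp => ⟨p, hp, rfl⟩⟩
    have hVnm : ¬ IsMeagre V := aux_not_meagre hVopen hVne
    have hAnm : ¬ IsMeagre A := fun hm => hVnm (by rw [← hset]; exact (h A hAE).mpr hm)
    -- A is not nowhere dense, so interior of its closure is nonempty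
    have hint : (interior (closure A)).Nonempty := by
      rw [nonempty_iff_ne_empty]
      exact fun he => hAnm (aux_nwd_meagre he)
    obtain ⟨c, d, hcd, hcdsub⟩ := isOpen_interior.exists_Ioo_subset hint
    have hIccl : Ioo c d ⊆ closure A := hcdsub.trans interior_subset
    -- V = val ⁻¹' U for some open U
    obtain ⟨U, hUopen, hUV⟩ := isOpen_induced_iff.mp hVopen
    have hAUE : A = U ∩ E := by
      ext x
      constructor
      · rintro ⟨p, hp, rfl⟩
        exact ⟨by rw [← hUV] at hp; exact hp, p.2⟩
      · rintro ⟨hxU, hxE⟩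
        exact ⟨⟨x, hxE⟩, by rw [← hUV]; exact hxU, rfl⟩
    -- a point of Ioo c d lies in closure A ⊆ closure U, so Ioo c d meets U
    have hmid : (c + d) / 2 ∈ Ioo c d := ⟨by linarith, by linarith⟩
    have hmcl : (c + d) / 2 ∈ closure U :=
      closure_mono (by rw [hAUE]; exact inter_subset_left) (hIccl hmid)
    obtain ⟨y, hyIoo, hyU⟩ := mem_closure_iff.mp hmcl (Ioo c d) isOpen_Ioo hmid
    -- find a small interval around y inside Ioo c d ∩ U
    obtain ⟨a, b, hab, habsub⟩ := (isOpen_Ioo.inter hUopen).exists_Ioo_subset ⟨y, hyIoo, hyU⟩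
    refine ⟨a, b, hab, fun x hx => ?_⟩
    have hx' := habsub hx
    have hxA : x ∈ A := by
      rw [hAUE]
      exact ⟨hx'.2, hEc.closure_subset_iff.mpr hAE (hIccl hx'.1)⟩
    exact hxA
  · -- (ii) → (i)
    intro h A hAE
    rw [isMeagre_iff_countable_union_isNowhereDense,
      isMeagre_iff_countable_union_isNowhereDense]
    constructor
    · -- meagre in E → meagre in ℝ
      rintro ⟨S, hnwd, hScount, hsub⟩
      refine ⟨(fun t => Subtype.val '' t) '' S, ?_, hScount.image _, ?_⟩
      · rintro _ ⟨t, htS, rfl⟩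
        -- val '' t nowhere dense in ℝ
        rw [IsNowhereDense, ← subset_empty_iff]
        intro x hx
        obtain ⟨a, b, hab, habsub⟩ :=
          isOpen_interior.exists_Ioo_subset ⟨x, hx⟩
        have hIE : Ioo a b ⊆ E := fun z hz =>
          hEc.closure_subset_iff.mpr (by rintro _ ⟨p, _, rfl⟩; exact p.2)
            (interior_subset (habsub hz))
        -- the preimage of Ioo a b is open nonempty in E, contained in closure t
        have hmid : (a + b) / 2 ∈ Ioo a b := ⟨by linarith, by linarith⟩
        have hpre : (Subtype.val ⁻¹' Ioo a b : Set E) ⊆ closure t := by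
          intro p hp
          rw [hemb.closure_eq_preimage_closure_image]
          exact mem_preimage.mpr (interior_subset (habsub hp))
        have hopen : IsOpen (Subtype.val ⁻¹' Ioo a b : Set E) :=
          isOpen_Ioo.preimage continuous_subtype_val
        have hne : (Subtype.val ⁻¹' Ioo a b : Set E).Nonempty :=
          ⟨⟨(a + b) / 2, hIE hmid⟩, hmid⟩
        have : (interior (closure t)).Nonempty :=
          hne.mono (interior_maximal hpre hopen)
        rw [hnwd t htS] at this
        exact this.ne_empty rfl
      · intro x hxA
        obtain ⟨t, htS, hxt⟩ := hsub (show (⟨x, hAE hxA⟩ : E) ∈ {p : E | (p : ℝ) ∈ A} from hxA)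
        exact ⟨Subtype.val '' t, ⟨t, htS, rfl⟩, ⟨⟨x, hAE hxA⟩, hxt, rfl⟩⟩
    · -- meagre in ℝ → meagre in E
      rintro ⟨S, hnwd, hScount, hsub⟩
      refine ⟨(fun t => (Subtype.val ⁻¹' t : Set E)) '' S, ?_, hScount.image _, ?_⟩
      · rintro _ ⟨t, htS, rfl⟩
        rw [IsNowhereDense, ← subset_empty_iff]
        intro p hp
        have hcl : closure (Subtype.val ⁻¹' t : Set E) ⊆ Subtype.val ⁻¹' closure t := by
          apply closure_minimal (preimage_mono subset_closure)
          exact isClosed_closure.preimage continuous_subtype_val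
        have hopen : IsOpen (interior (closure (Subtype.val ⁻¹' t : Set E))) := isOpen_interior
        obtain ⟨a, b, hab, habsub⟩ := h _ hopen ⟨p, hp⟩
        have : Ioo a b ⊆ closure t := by
          intro z hz
          obtain ⟨q, hq, rfl⟩ := habsub hz
          exact hcl (interior_subset hq)
        have h2 : Ioo a b ⊆ interior (closure t) := interior_maximal this isOpen_Ioo
        rw [hnwd t htS] at h2
        exact absurd (h2 ⟨(by linarith : a < (a + b) / 2), (by linarith : (a + b) / 2 < b)⟩) (notMem_empty _)
      · intro p hp
        obtain ⟨t, htS, hxt⟩ := hsub hp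
        exact ⟨Subtype.val ⁻¹' t, ⟨t, htS, rfl⟩, hxt⟩
end
end

section
/- Let (x_n) be a summable sequence of positive real numbers such that the achievement set E = E(x_n) contains a nondegenerate open interval. Then a subset of E is meager in the subspace E if and only if it is meager in ℝ. -/
/-!
A set that is nowhere dense in a subspace `Y` is nowhere dense in the whole space, and the
converse holds as soon as `Y ⊆ closure (interior Y)`; so it suffices to show that the achievement
set `E` is the closure of its interior. For every `N`, `E` is the finite union of the translates
`∑_{n ∈ s} xₙ + E_N`, `s ⊆ {0, …, N - 1}`, of the compact achievement set `E_N` of the tail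
`(x_{n + N})`. By Baire, one of these translates, hence `E_N` itself, has interior points, and
`E_N ⊆ [0, ∑_{n ≥ N} xₙ]` is arbitrarily small: every point of `E` is close to an interior point.
-/

open Set Topology

noncomputable section

open Pointwise

section Subspace

variable {X : Type*} [TopologicalSpace X] {Y : Set X}

theorem IsNowhereDense.preimage_val (hY : Y ⊆ closure (interior Y)) {s : Set X}
    (hs : IsNowhereDense s) : IsNowhereDense ((↑) ⁻¹' s : Set Y) := by
  refine eq_empty_iff_forall_notMem.2 fun q hq => ?_
  obtain ⟨-, hVs, ⟨V, hV, rfl⟩, hqV⟩ := mem_interior.1 <|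
    interior_mono (continuous_subtype_val.closure_preimage_subset s) hq
  obtain ⟨w, hwV, hwY⟩ := mem_closure_iff.1 (hY q.2) V hV hqV
  have hVY : V ∩ interior Y ⊆ closure s := fun p hp => @hVs ⟨p, interior_subset hp.2⟩ hp.1
  exact Eq.subset hs (interior_maximal hVY (hV.inter isOpen_interior) ⟨hwV, hwY⟩)

theorem IsMeagre.preimage_val (hY : Y ⊆ closure (interior Y)) {s : Set X} (hs : IsMeagre s) :
    IsMeagre ((↑) ⁻¹' s : Set Y) := by
  obtain ⟨S, hS, hc, hsub⟩ := isMeagre_iff_countable_union_isNowhereDense.1 hs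
  refine isMeagre_iff_countable_union_isNowhereDense.2
    ⟨preimage (↑) '' S, forall_mem_image.2 fun t ht => (hS t ht).preimage_val hY, hc.image _, ?_⟩
  rw [sUnion_image, ← preimage_iUnion₂, ← sUnion_eq_biUnion]
  exact preimage_mono hsub

end Subspace

open Classical in
theorem Summable.tsum_subtype_eq_sum_add_tsum_nat_add {G : Type*} [AddCommGroup G]
    [UniformSpace G] [IsUniformAddGroup G] [CompleteSpace G] [T2Space G] {x : ℕ → G}
    (hsum : Summable x) (N : ℕ) (A : Set ℕ) :
    ∑' n : A, x n = ∑ n ∈ Finset.range N with n ∈ A, x n + ∑' n : (· + N) ⁻¹' A, x (n + N) := by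
  rw [tsum_subtype, tsum_subtype _ fun n => x (n + N),
    ← (hsum.indicator A).sum_add_tsum_nat_add N, Finset.sum_filter]
  simp only [indicator_apply]
  rfl

namespace achSet

variable {x : ℕ → ℝ}

theorem eq_range_tsum_indicator :
    achSet x = range fun f : ℕ → Bool => ∑' n, {n | f n}.indicator x n := by
  ext t
  constructor
  · rintro ⟨A, rfl⟩
    classical
    exact ⟨fun n => decide (n ∈ A), by simp [tsum_subtype]⟩
  · rintro ⟨f, rfl⟩
    exact ⟨{n | f n}, (tsum_subtype _ x).symm⟩

theorem isCompact (hsum : Summable x) : IsCompact (achSet x) := by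
  rw [eq_range_tsum_indicator]
  refine isCompact_range <| continuous_tsum (fun n => ?_) hsum.abs fun n f => ?_
  · refine ((continuous_of_discreteTopology (f := fun b : Bool => if b then x n else 0)).comp
      (continuous_apply n)).congr fun f => ?_
    simp [indicator_apply]
  · exact norm_indicator_le_norm_self x n

theorem subset_Icc (hx : ∀ n, 0 ≤ x n) (hsum : Summable x) :
    achSet x ⊆ Icc 0 (∑' n, x n) := by
  rintro _ ⟨A, rfl⟩
  exact ⟨tsum_nonneg fun n => hx n, hsum.tsum_subtype_le x A hx⟩

theorem eq_biUnion_vadd_tail (hsum : Summable x) (N : ℕ) :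
    achSet x = ⋃ s ∈ (Finset.range N).powerset, (∑ n ∈ s, x n) +ᵥ achSet fun n => x (n + N) := by
  classical
  ext t
  simp only [mem_iUnion, Finset.mem_powerset, mem_vadd_set, vadd_eq_add, exists_prop]
  constructor
  · rintro ⟨A, rfl⟩
    exact ⟨_, Finset.filter_subset _ _, _, ⟨_, rfl⟩,
      (hsum.tsum_subtype_eq_sum_add_tsum_nat_add N A).symm⟩
  · rintro ⟨s, hs, _, ⟨B, rfl⟩, rfl⟩
    refine ⟨s ∪ (· + N) '' B, ?_⟩
    have hlt : ∀ n ∈ s, n < N := fun n hn => Finset.mem_range.1 (hs hn)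
    have htail : (· + N) ⁻¹' (s ∪ (· + N) '' B : Set ℕ) = B := by
      ext n
      simp only [mem_preimage, mem_union, Finset.mem_coe, mem_image, add_left_inj, exists_eq_right]
      exact or_iff_right fun hns => by have := hlt _ hns; omega
    rw [hsum.tsum_subtype_eq_sum_add_tsum_nat_add N, htail, add_left_inj]
    congr 1
    ext n
    simp only [Finset.mem_filter, Finset.mem_range, mem_union, Finset.mem_coe, mem_image]
    constructor
    · exact fun hns => ⟨hlt n hns, .inl hns⟩
    · rintro ⟨hn, hns | ⟨b, -, rfl⟩⟩
      exacts [hns, absurd hn (by omega)]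

theorem interior_tail_nonempty (hsum : Summable x) {a b : ℝ} (hab : a < b)
    (hI : Ioo a b ⊆ achSet x) (N : ℕ) : (interior (achSet fun n => x (n + N))).Nonempty := by
  have hcover := hI.trans (eq_biUnion_vadd_tail hsum N).subset
  obtain ⟨s, -, hs⟩ := exists_of_not_isMeagre_biUnion (Finset.countable_toSet _)
    fun h => not_isMeagre_of_isOpen isOpen_Ioo (nonempty_Ioo.2 hab) (h.mono hcover)
  have hclosed : IsClosed ((∑ n ∈ s, x n) +ᵥ achSet fun n => x (n + N)) :=
    ((isCompact ((summable_nat_add_iff N).2 hsum)).vadd _).isClosed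
  have hint : (interior ((∑ n ∈ s, x n) +ᵥ achSet fun n => x (n + N))).Nonempty := by
    by_contra h
    exact hs (hclosed.isNowhereDense_iff.2 (not_nonempty_iff_eq_empty.1 h)).isMeagre
  rwa [interior_vadd, vadd_set_nonempty] at hint

theorem subset_closure_interior (hx : ∀ n, 0 ≤ x n) (hsum : Summable x) {a b : ℝ} (hab : a < b)
    (hI : Ioo a b ⊆ achSet x) : achSet x ⊆ closure (interior (achSet x)) := by
  intro t ht
  refine Metric.mem_closure_iff.2 fun ε hε => ?_
  obtain ⟨N, hN⟩ := ((tendsto_sum_nat_add x).eventually (gt_mem_nhds hε)).exists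
  rw [eq_biUnion_vadd_tail hsum N] at ht ⊢
  obtain ⟨s, hs, u, hu, rfl⟩ := mem_iUnion₂.1 ht
  obtain ⟨q, hq⟩ := interior_tail_nonempty hsum hab hI N
  refine ⟨(∑ n ∈ s, x n) +ᵥ q, interior_mono (subset_biUnion_of_mem hs) ?_, ?_⟩
  · rw [interior_vadd]
    exact vadd_mem_vadd_set hq
  · have hIcc := subset_Icc (fun n => hx (n + N)) ((summable_nat_add_iff N).2 hsum)
    calc dist _ _ = dist u q := dist_add_left _ _ _
      _ ≤ ∑' n, x (n + N) - 0 := Real.dist_le_of_mem_Icc (hIcc hu) (hIcc (interior_subset hq))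
      _ < ε := by rwa [sub_zero]

end achSet

theorem meagre_subspace_iff_meagre_of_achSet_contains_interval
    (x : ℕ → ℝ) (hpos : ∀ n, 0 < x n) (hsum : Summable x)
    (hint : ∃ a b : ℝ, a < b ∧ Set.Ioo a b ⊆ achSet x) :
    ∀ A : Set ℝ, A ⊆ achSet x →
      (IsMeagre {p : achSet x | (p : ℝ) ∈ A} ↔ IsMeagre A) := by
  obtain ⟨a, b, hab, hI⟩ := hint
  have hreg := achSet.subset_closure_interior (fun n => (hpos n).le) hsum hab hI
  intro A hA
  refine ⟨fun h => ?_, fun h => h.preimage_val hreg⟩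
  rw [← inter_eq_right.2 hA, ← Subtype.image_preimage_coe]
  exact h.image_val
end
end

section
/- Let f : {0,1}^ℕ → ℝ be a continuous semi-open function and let B = {x ∈ {0,1}^ℕ : f⁻¹({f(x)}) = {x}}. If B is nowhere dense in {0,1}^ℕ, then f(B) is nowhere dense in ℝ. -/
/-!
The points of `B` are exactly those whose fibre is a singleton, so `B` is saturated:
`f ⁻¹' (f '' B) = B`. If `f '' B` were dense in a nonempty open set `W`, then `f ⁻¹' W` would
be a nonempty open set, and since `B` is nowhere dense, `f ⁻¹' W` contains a nonempty open `V`
missing `closure B`. By semi-openness `f '' V` contains a nonempty open subset of `W`, which must meet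
`f '' B`; but a point of `f '' V ∩ f '' B` has a preimage in `V ∩ B = ∅` by saturation.
-/

open Set Topology

noncomputable section

theorem preimage_image_setOf_preimage_singleton_eq {X Y : Type*} (f : X → Y) :
    f ⁻¹' (f '' {x | f ⁻¹' {f x} = {x}}) = {x | f ⁻¹' {f x} = {x}} := by
  refine Subset.antisymm ?_ (subset_preimage_image f _)
  rintro u ⟨x, hx, hfx⟩
  have hu : u ∈ f ⁻¹' {f x} := hfx.symm
  rw [show f ⁻¹' {f x} = {x} from hx, mem_singleton_iff] at hu
  rwa [hu]

theorem IsNowhereDense.image_of_preimage_image_eq {X Y : Type*} [TopologicalSpace X]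
    [TopologicalSpace Y] {f : X → Y} (hf : Continuous f)
    (hopen : ∀ V : Set X, IsOpen V → V.Nonempty → (interior (f '' V)).Nonempty)
    {s : Set X} (hsat : f ⁻¹' (f '' s) = s) (hs : IsNowhereDense s) :
    IsNowhereDense (f '' s) := by
  set W := interior (closure (f '' s))
  rw [IsNowhereDense, ← not_nonempty_iff_eq_empty]
  rintro ⟨y, hy⟩
  have hW_meets : ∀ O ⊆ W, IsOpen O → O.Nonempty → (f '' s ∩ O).Nonempty :=
    fun O hOW hO ⟨z, hz⟩ ↦
      (closure_inter_open_nonempty_iff hO).mp ⟨z, interior_subset (hOW hz), hz⟩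
  have hV_open : IsOpen (f ⁻¹' W) := isOpen_interior.preimage hf
  have hV_ne : (f ⁻¹' W).Nonempty := by
    obtain ⟨_, ⟨x, -, rfl⟩, hxW⟩ := hW_meets W Subset.rfl isOpen_interior ⟨y, hy⟩
    exact ⟨x, hxW⟩
  set V := f ⁻¹' W ∩ (closure s)ᶜ
  have hV : IsOpen V ∧ V.Nonempty :=
    ⟨hV_open.inter isClosed_closure.isOpen_compl,
      (interior_eq_empty_iff_dense_compl.mp hs).inter_open_nonempty _ hV_open hV_ne⟩
  have hfV : interior (f '' V) ⊆ W :=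
    interior_subset.trans <| (image_mono inter_subset_left).trans (image_preimage_subset f W)
  obtain ⟨_, ⟨x, hxs, rfl⟩, hxV⟩ :=
    hW_meets _ hfV isOpen_interior (hopen V hV.1 hV.2)
  obtain ⟨u, huV, hux⟩ := interior_subset hxV
  have hus : u ∈ s := hsat ▸ ⟨x, hxs, hux.symm⟩
  exact huV.2 (subset_closure hus)

theorem image_uniq_nowhereDense (f : (ℕ → Bool) → ℝ)
    (hcont : Continuous f) (hso : SemiOpen f)
    (B : Set (ℕ → Bool)) (hB : B = {x : ℕ → Bool | f ⁻¹' {f x} = {x}})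
    (hnwd : IsNowhereDense B) :
    IsNowhereDense (f '' B) := by
  subst hB
  exact hnwd.image_of_preimage_image_eq hcont hso (preimage_image_setOf_preimage_singleton_eq f)
end
end

section
/- Let (a_n) ∈ {0,2,3,5}^ℕ. The following are equivalent: (1) there exists (b_n) ∈ {0,2,3,5}^ℕ with (b_n) ≠ (a_n) and ∑_{n=1}^∞ a_n/4^n = ∑_{n=1}^∞ b_n/4^n; (2) the set {n ∈ ℕ : (a_n, a_{n+1}) ∈ {(2,3), (3,2), (3,0), (2,5)}} is finite and nonempty. -/
/-!
If `∑ a m / 4 ^ (m + 1) = ∑ b m / 4 ^ (m + 1)`, the rescaled tails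
`c m = 4 ^ m * ∑_{k ≥ m} (b k - a k) / 4 ^ (k + 1)` satisfy `b m - a m = 4 c m - c (m + 1)` and
`|c m| ≤ 5 / 3`, so they are integers in `{-1, 0, 1}` with `c 0 = 0`; conversely such a carry
sequence makes the two sums agree by telescoping. No two digits of `{0, 2, 3, 5}` differ by `4`,
so once the carry is nonzero it stays nonzero, and its sign is then dictated by the digit of `a`
(`+1` under `0, 2` and `-1` under `3, 5`). The bad pairs are exactly the places where a carry can
be created (`c n = 0 ≠ c (n + 1)`) but cannot be passed on, so a second representation exists iff
there is a last bad pair.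
-/

open Set Topology

noncomputable section

lemma finite_and_nonempty_iff_exists_isGreatest {α : Type*} [LinearOrder α]
    [LocallyFiniteOrderBot α] {s : Set α} : s.Finite ∧ s.Nonempty ↔ ∃ n, IsGreatest s n := by
  constructor
  · rintro ⟨hfin, hne⟩
    obtain ⟨n, hn, hmax⟩ := Set.exists_max_image s id hfin hne
    exact ⟨n, hn, hmax⟩
  · rintro ⟨n, hn, hmax⟩
    exact ⟨(Set.finite_Iic n).subset hmax, n, hn⟩

lemma hasSum_div_four_pow_succ (C : ℝ) : HasSum (fun k : ℕ => C / 4 ^ (k + 1)) (C / 3) := by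
  have h := (hasSum_geometric_of_lt_one (r := (1 / 4 : ℝ)) (by norm_num) (by norm_num)).mul_left
    (C / 4)
  rw [show C / 4 * (1 - 1 / 4)⁻¹ = C / 3 by norm_num; ring] at h
  refine h.congr_fun fun k => ?_
  rw [one_div, inv_pow, pow_succ]
  ring

section TailBounds

variable {f : ℕ → ℝ} {C : ℝ}

lemma norm_div_four_pow_succ_le (hf : ∀ k, |f k| ≤ C) (k : ℕ) :
    ‖f k / 4 ^ (k + 1)‖ ≤ C / 4 ^ (k + 1) := by
  rw [Real.norm_eq_abs, abs_div, abs_of_pos (by positivity : (0 : ℝ) < 4 ^ (k + 1))]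
  exact div_le_div_of_nonneg_right (hf k) (by positivity)

lemma summable_div_four_pow_succ (hf : ∀ k, |f k| ≤ C) : Summable fun k => f k / 4 ^ (k + 1) :=
  (hasSum_div_four_pow_succ C).summable.of_norm_bounded (norm_div_four_pow_succ_le hf)

lemma abs_tsum_div_four_pow_succ_le (hf : ∀ k, |f k| ≤ C) :
    |∑' k, f k / 4 ^ (k + 1)| ≤ C / 3 :=
  tsum_of_norm_bounded (hasSum_div_four_pow_succ C) (norm_div_four_pow_succ_le hf)

lemma tsum_shift_div_four_pow_succ (hf : ∀ k, |f k| ≤ C) (m : ℕ) :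
    ∑' k, f (m + k) / 4 ^ (k + 1) =
      f m / 4 + (∑' k, f (m + 1 + k) / 4 ^ (k + 1)) / 4 := by
  rw [(summable_div_four_pow_succ fun k => hf (m + k)).tsum_eq_zero_add, ← tsum_div_const]
  congr 1
  · simp
  · refine tsum_congr fun k => ?_
    rw [pow_succ, div_div]
    congr 2
    omega

end TailBounds

/-- `c m` stands for `4 ^ m * ∑_{k ≥ m} δ k / 4 ^ (k + 1)`, the carry passed from position `m`
to position `m - 1` when `∑ δ k / 4 ^ (k + 1) = 0`. -/
structure IsCarry (δ c : ℕ → ℤ) : Prop where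
  zero : c 0 = 0
  abs_le_one : ∀ m, |c m| ≤ 1
  sub_eq : ∀ m, δ m = 4 * c m - c (m + 1)

def carryOf (δ : ℕ → ℤ) : ℕ → ℤ
  | 0 => 0
  | m + 1 => 4 * carryOf δ m - δ m

section Carry

variable {δ : ℕ → ℤ}

lemma tsum_shift_eq_carryOf {C : ℝ} (hδ : ∀ m, |(δ m : ℝ)| ≤ C)
    (h : ∑' m, (δ m : ℝ) / 4 ^ (m + 1) = 0) (m : ℕ) :
    ∑' k, (δ (m + k) : ℝ) / 4 ^ (k + 1) = carryOf δ m := by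
  induction m with
  | zero => simpa [carryOf] using h
  | succ m ih =>
    have hsplit := tsum_shift_div_four_pow_succ hδ m
    rw [ih] at hsplit
    rw [carryOf]
    push_cast
    linarith

lemma isCarry_carryOf (hδ : ∀ m, |δ m| ≤ 5) (h : ∑' m, (δ m : ℝ) / 4 ^ (m + 1) = 0) :
    IsCarry δ (carryOf δ) where
  zero := rfl
  abs_le_one m := by
    have hcast : ∀ k, |(δ k : ℝ)| ≤ 5 := fun k => by exact_mod_cast hδ k
    have hle := abs_tsum_div_four_pow_succ_le fun k => hcast (m + k)
    rw [tsum_shift_eq_carryOf hcast h] at hle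
    have hlt : ((|carryOf δ m| : ℤ) : ℝ) < 2 := by rw [Int.cast_abs]; linarith
    have : |carryOf δ m| < 2 := by exact_mod_cast hlt
    omega
  sub_eq m := by rw [carryOf]; ring

lemma IsCarry.tsum_eq_zero {c : ℕ → ℤ} (hc : IsCarry δ c) :
    ∑' m, (δ m : ℝ) / 4 ^ (m + 1) = 0 := by
  set u : ℕ → ℝ := fun m => (c m : ℝ) / 4 ^ m
  have hu : Summable u := by
    refine ((summable_div_four_pow_succ (f := fun m => (c m : ℝ)) (C := 1) fun m => ?_).mul_left
      4).congr fun m => ?_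
    · exact_mod_cast hc.abs_le_one m
    · simp only [u, pow_succ]
      field_simp
  have hterm : ∀ m, (δ m : ℝ) / 4 ^ (m + 1) = u m - u (m + 1) := fun m => by
    simp only [u, hc.sub_eq m, pow_succ]
    push_cast
    field_simp
  simp_rw [hterm]
  rw [hu.tsum_sub ((summable_nat_add_iff 1).2 hu), hu.tsum_eq_zero_add]
  simp [u, hc.zero]

lemma tsum_eq_zero_iff_exists_isCarry (hδ : ∀ m, |δ m| ≤ 5) :
    ∑' m, (δ m : ℝ) / 4 ^ (m + 1) = 0 ↔ ∃ c, IsCarry δ c :=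
  ⟨fun h => ⟨_, isCarry_carryOf hδ h⟩, fun ⟨_, hc⟩ => hc.tsum_eq_zero⟩

end Carry

lemma tsum_eq_tsum_iff_exists_isCarry {a b : ℕ → ℕ} (ha : ∀ m, a m ≤ 5) (hb : ∀ m, b m ≤ 5) :
    ∑' m, (a m : ℝ) / 4 ^ (m + 1) = ∑' m, (b m : ℝ) / 4 ^ (m + 1) ↔
      ∃ c, IsCarry (fun m => (b m : ℤ) - a m) c := by
  have hsum {x : ℕ → ℕ} (hx : ∀ m, x m ≤ 5) : Summable fun m => (x m : ℝ) / 4 ^ (m + 1) :=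
    summable_div_four_pow_succ (C := 5) fun m => by
      rw [abs_of_nonneg (by positivity)]
      exact_mod_cast hx m
  have hδ : ∀ m, |(b m : ℤ) - a m| ≤ 5 := fun m => by
    have := ha m
    have := hb m
    rw [abs_le]
    omega
  rw [← tsum_eq_zero_iff_exists_isCarry hδ, eq_comm, ← sub_eq_zero,
    ← (hsum hb).tsum_sub (hsum ha)]
  push_cast [sub_div]
  rfl

def gnDigits : Set ℕ := {0, 2, 3, 5}

def gnBadPairs : Set (ℕ × ℕ) := {(2, 3), (3, 2), (3, 0), (2, 5)}

/-- A carry of `1` into a digit `x` turns it into `x + 3` or `x + 5`, a carry of `-1` into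
`x - 3` or `x - 5`: for `x ∈ {0, 2, 3, 5}` only one sign can land in the digits again. -/
def forcedCarry (x : ℕ) : ℤ := if x ≤ 2 then 1 else -1

lemma abs_forcedCarry (x : ℕ) : |forcedCarry x| = 1 := by
  unfold forcedCarry
  split_ifs <;> rfl

lemma le_five_of_mem_gnDigits {x : ℕ} (hx : x ∈ gnDigits) : x ≤ 5 := by
  simp only [gnDigits, mem_insert_iff, mem_singleton_iff] at hx
  omega

lemma eq_forcedCarry_of_sub_eq {x y : ℕ} (hx : x ∈ gnDigits) (hy : y ∈ gnDigits) {σ τ : ℤ}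
    (hσ : |σ| ≤ 1) (hτ : |τ| ≤ 1) (hσ0 : σ ≠ 0) (h : (y : ℤ) - x = 4 * σ - τ) :
    σ = forcedCarry x ∧ τ ≠ 0 := by
  simp only [gnDigits, mem_insert_iff, mem_singleton_iff] at hx hy
  rw [abs_le] at hσ hτ
  unfold forcedCarry
  split_ifs <;> omega

lemma mem_gnBadPairs_iff {x y : ℕ} (hx : x ∈ gnDigits) (hy : y ∈ gnDigits) :
    (x, y) ∈ gnBadPairs ↔ ∃ z ∈ gnDigits, (z : ℤ) = x - forcedCarry y := by
  simp only [gnDigits, mem_insert_iff, mem_singleton_iff] at hx hy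
  rcases hx with rfl | rfl | rfl | rfl <;> rcases hy with rfl | rfl | rfl | rfl <;>
    simp [gnDigits, gnBadPairs, forcedCarry]

lemma notMem_gnBadPairs_iff {x y : ℕ} (hx : x ∈ gnDigits) (hy : y ∈ gnDigits) :
    (x, y) ∉ gnBadPairs ↔ ∃ z ∈ gnDigits, (z : ℤ) = x + 4 * forcedCarry x - forcedCarry y := by
  simp only [gnDigits, mem_insert_iff, mem_singleton_iff] at hx hy
  rcases hx with rfl | rfl | rfl | rfl <;> rcases hy with rfl | rfl | rfl | rfl <;>
    simp [gnDigits, gnBadPairs, forcedCarry]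

section DigitCarry

variable {a b : ℕ → ℕ} {c : ℕ → ℤ}

lemma IsCarry.eq_forcedCarry (ha : ∀ m, a m ∈ gnDigits) (hb : ∀ m, b m ∈ gnDigits)
    (hc : IsCarry (fun m => (b m : ℤ) - a m) c) {m : ℕ} (hm : c m ≠ 0) :
    c m = forcedCarry (a m) ∧ c (m + 1) ≠ 0 :=
  eq_forcedCarry_of_sub_eq (ha m) (hb m) (hc.abs_le_one m) (hc.abs_le_one (m + 1)) hm (hc.sub_eq m)

lemma IsCarry.ne_zero_of_lt (ha : ∀ m, a m ∈ gnDigits) (hb : ∀ m, b m ∈ gnDigits)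
    (hc : IsCarry (fun m => (b m : ℤ) - a m) c) {n m : ℕ} (hn : c (n + 1) ≠ 0) (hnm : n < m) :
    c m ≠ 0 := by
  induction m, hnm using Nat.le_induction with
  | base => exact hn
  | succ m _ ih => exact (hc.eq_forcedCarry ha hb ih).2

lemma IsCarry.exists_isGreatest_gnBadPairs (ha : ∀ m, a m ∈ gnDigits) (hb : ∀ m, b m ∈ gnDigits)
    (hc : IsCarry (fun m => (b m : ℤ) - a m) c) (hne : b ≠ a) :
    ∃ n, IsGreatest {m | (a m, a (m + 1)) ∈ gnBadPairs} n := by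
  have hex : ∃ k, c k ≠ 0 := by
    obtain ⟨k, hk⟩ := Function.ne_iff.mp hne
    by_contra! hzero
    have := hc.sub_eq k
    rw [hzero, hzero] at this
    omega
  obtain ⟨n, hn, hn1⟩ := Nat.exists_not_and_succ_of_not_zero_of_exists (not_not.2 hc.zero) hex
  rw [not_not] at hn
  have hcarry {m : ℕ} (hm : c m ≠ 0) := (hc.eq_forcedCarry ha hb hm).1
  refine ⟨n, ?_, fun m hm => ?_⟩
  · refine (mem_gnBadPairs_iff (ha n) (ha (n + 1))).2 ⟨b n, hb n, ?_⟩
    have := hc.sub_eq n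
    rw [← hcarry hn1]
    omega
  · by_contra! hlt
    refine (notMem_gnBadPairs_iff (ha m) (ha (m + 1))).2 ⟨b m, hb m, ?_⟩ hm
    have := hc.sub_eq m
    rw [← hcarry (hc.ne_zero_of_lt ha hb hn1 hlt),
      ← hcarry (hc.ne_zero_of_lt ha hb hn1 (by omega : n < m + 1))]
    omega

end DigitCarry

lemma exists_ne_tsum_eq_of_isGreatest {a : ℕ → ℕ} (ha : ∀ m, a m ∈ gnDigits) {n : ℕ}
    (hn : IsGreatest {m | (a m, a (m + 1)) ∈ gnBadPairs} n) :
    ∃ b : ℕ → ℕ, (∀ m, b m ∈ gnDigits) ∧ b ≠ a ∧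
      ∑' m, (a m : ℝ) / 4 ^ (m + 1) = ∑' m, (b m : ℝ) / 4 ^ (m + 1) := by
  set c : ℕ → ℤ := fun m => if m ≤ n then 0 else forcedCarry (a m)
  have hdigit : ∀ m, ∃ z ∈ gnDigits, (z : ℤ) = a m + 4 * c m - c (m + 1) := by
    intro m
    rcases lt_trichotomy m n with hlt | rfl | hgt
    · refine ⟨a m, ha m, ?_⟩
      simp [c, hlt.le, Nat.succ_le_of_lt hlt]
    · simpa [c] using (mem_gnBadPairs_iff (ha m) (ha (m + 1))).1 hn.1
    · have hbad : (a m, a (m + 1)) ∉ gnBadPairs := fun h => absurd (hn.2 h) (by omega)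
      simpa [c, show ¬m ≤ n by omega, show ¬m < n by omega]
        using (notMem_gnBadPairs_iff (ha m) (ha (m + 1))).1 hbad
  choose b hb hbc using hdigit
  have hc : IsCarry (fun m => (b m : ℤ) - a m) c :=
    { zero := by simp [c]
      abs_le_one := fun m => by
        simp only [c]
        split_ifs
        · simp
        · exact (abs_forcedCarry _).le
      sub_eq := fun m => by simp only [hbc m]; ring }
  refine ⟨b, hb, fun h => ?_, (tsum_eq_tsum_iff_exists_isCarry
    (fun m => le_five_of_mem_gnDigits (ha m)) (fun m => le_five_of_mem_gnDigits (hb m))).2 ⟨c, hc⟩⟩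
  have hzero : forcedCarry (a (n + 1)) = 0 := by
    have := hbc n
    simp only [h, c, le_refl, if_true, show ¬n + 1 ≤ n by omega, if_false] at this
    omega
  simpa [hzero] using abs_forcedCarry (a (n + 1))

theorem gn_unique_characterization (a : ℕ → ℕ) (ha : ∀ n, a n ∈ ({0, 2, 3, 5} : Set ℕ)) :
    (∃ b : ℕ → ℕ, (∀ n, b n ∈ ({0, 2, 3, 5} : Set ℕ)) ∧ b ≠ a ∧
        ∑' n : ℕ, (a n : ℝ) / 4 ^ (n + 1) = ∑' n : ℕ, (b n : ℝ) / 4 ^ (n + 1)) ↔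
      ({n : ℕ | (a n, a (n + 1)) ∈ ({(2, 3), (3, 2), (3, 0), (2, 5)} : Set (ℕ × ℕ))}.Finite ∧
        {n : ℕ | (a n, a (n + 1)) ∈ ({(2, 3), (3, 2), (3, 0), (2, 5)} : Set (ℕ × ℕ))}.Nonempty) := by
  rw [finite_and_nonempty_iff_exists_isGreatest]
  constructor
  · rintro ⟨b, hb, hne, hsum⟩
    obtain ⟨c, hc⟩ := (tsum_eq_tsum_iff_exists_isCarry (fun m => le_five_of_mem_gnDigits (ha m))
      (fun m => le_five_of_mem_gnDigits (hb m))).1 hsum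
    exact hc.exists_isGreatest_gnBadPairs ha hb hne
  · rintro ⟨n, hn⟩
    exact exists_ne_tsum_eq_of_isGreatest ha hn
end
end
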